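/- arXiv:1404.6073 — 13 statements merged into one kernel-verified Lean document; each statement's English description precedes it below -/
import Mathlib

section
/- Let α > 0, β ≥ 0 and let δ be a real number with 0 < δ < α⁻¹. Then for all integers a, b with 0 ≤ a ≤ b, the finite product ∏_{i=a}^{b} (1 − αδ/(1 + (i + β)δ)) equals [Γ(b + 1 + δ⁻¹ + β − α)/Γ(b + 1 + δ⁻¹ + β)] · [Γ(a + δ⁻¹ + β)/Γ(a + δ⁻¹ + β − α)]. -/
/-- Lemma 2.2: finite product identity in terms of the gamma function. -/
theorem product_eq_gamma_ratio (α β δ : ℝ) (hα : 0 < α) (hβ : 0 ≤ β)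
    (hδ0 : 0 < δ) (hδ : δ < α⁻¹) (a b : ℕ) (hab : a ≤ b) :
    ∏ i ∈ Finset.Icc a b, (1 - α * δ / (1 + ((i : ℝ) + β) * δ)) =
      (Real.Gamma ((b : ℝ) + 1 + δ⁻¹ + β - α) / Real.Gamma ((b : ℝ) + 1 + δ⁻¹ + β)) *
        (Real.Gamma ((a : ℝ) + δ⁻¹ + β) / Real.Gamma ((a : ℝ) + δ⁻¹ + β - α)) := by
  have hαδ : α < δ⁻¹ := by
    have := inv_strictAnti₀ hδ0 hδ
    rwa [inv_inv] at this
  have hcα : ∀ n : ℕ, 0 < (n : ℝ) + δ⁻¹ + β - α := fun n => by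
    have : (0:ℝ) ≤ n := n.cast_nonneg
    linarith
  have hcp : ∀ n : ℕ, 0 < (n : ℝ) + δ⁻¹ + β := fun n => by
    have := hcα n; linarith
  have hfac : ∀ i : ℕ, 1 - α * δ / (1 + ((i : ℝ) + β) * δ) =
      ((i : ℝ) + δ⁻¹ + β - α) / ((i : ℝ) + δ⁻¹ + β) := fun i => by
    have h1 : 1 + ((i : ℝ) + β) * δ = δ * ((i : ℝ) + δ⁻¹ + β) := by
      field_simp; ring
    have h2 : ((i : ℝ) + δ⁻¹ + β) ≠ 0 := (hcp i).ne'
    rw [h1, mul_comm α δ, mul_div_mul_left _ _ hδ0.ne', one_sub_div h2]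
  have key : ∀ (p q X Y Z W : ℝ), q ≠ 0 → X ≠ 0 → Y ≠ 0 → Z ≠ 0 → W ≠ 0 →
      (X / Y * (Z / W)) * (p / q) = (p * X) / (q * Y) * (Z / W) := by
    intro p q X Y Z W hq hX hY hZ hW
    field_simp
  induction b, hab using Nat.le_induction with
  | base =>
      rw [Finset.Icc_self, Finset.prod_singleton, hfac a]
      have e1 : (a : ℝ) + 1 + δ⁻¹ + β - α = ((a : ℝ) + δ⁻¹ + β - α) + 1 := by ring
      have e2 : (a : ℝ) + 1 + δ⁻¹ + β = ((a : ℝ) + δ⁻¹ + β) + 1 := by ring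
      rw [e1, e2, Real.Gamma_add_one (hcα a).ne', Real.Gamma_add_one (hcp a).ne']
      have g1 := (Real.Gamma_pos_of_pos (hcα a)).ne'
      have g2 := (Real.Gamma_pos_of_pos (hcp a)).ne'
      rw [div_mul_div_comm, div_eq_div_iff (by positivity) (by positivity)]
      ring
  | succ n hn ih =>
      rw [Finset.prod_Icc_succ_top (by omega : a ≤ n + 1), ih, hfac (n + 1)]
      have e1 : ((n + 1 : ℕ) : ℝ) + 1 + δ⁻¹ + β - α = (((n+1:ℕ) : ℝ) + δ⁻¹ + β - α) + 1 := by
        push_cast; ring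
      have e2 : ((n + 1 : ℕ) : ℝ) + 1 + δ⁻¹ + β = (((n+1:ℕ) : ℝ) + δ⁻¹ + β) + 1 := by
        push_cast; ring
      have e3 : (n : ℝ) + 1 + δ⁻¹ + β - α = ((n+1:ℕ) : ℝ) + δ⁻¹ + β - α := by push_cast; ring
      have e4 : (n : ℝ) + 1 + δ⁻¹ + β = ((n+1:ℕ) : ℝ) + δ⁻¹ + β := by push_cast; ring
      rw [e1, e2, e3, e4, Real.Gamma_add_one (hcα (n+1)).ne', Real.Gamma_add_one (hcp (n+1)).ne']
      exact key _ _ _ _ _ _ (hcp (n+1)).ne' (Real.Gamma_pos_of_pos (hcα (n+1))).ne'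
        (Real.Gamma_pos_of_pos (hcp (n+1))).ne' (Real.Gamma_pos_of_pos (hcp a)).ne'
        (Real.Gamma_pos_of_pos (hcα a)).ne'
end

section
/- For every real x > 0 and every real η with 0 < η < 1, one has Γ(x + η)/Γ(x) < x^η. -/
/-!
Log-convexity of `Γ` between `s` and `s + 1` gives `Γ(s + η) ≤ Γ(s) s ^ η`. Applied at `s = x + 1`
and pulled back to `x` with `Γ(s + 1) = s Γ(s)`, it bounds `Γ(x + η) / Γ(x)` by
`x (x + 1) ^ η / (x + η)`, and this is strictly below `x ^ η` by the strict weighted AM-GM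
inequality `x ^ (1 - η) (x + 1) ^ η < (1 - η) x + η (x + 1) = x + η`.
-/

namespace Real

theorem Gamma_add_le_Gamma_mul_rpow {s η : ℝ} (hs : 0 < s) (hη0 : 0 ≤ η) (hη1 : η ≤ 1) :
    Gamma (s + η) ≤ Gamma s * s ^ η := by
  rcases hη0.eq_or_lt with rfl | hη_pos
  · simp
  rcases hη1.eq_or_lt with rfl | hη_lt
  · rw [Gamma_add_one hs.ne', rpow_one, mul_comm]
  have hG : 0 < Gamma s := Gamma_pos_of_pos hs
  calc Gamma (s + η) = Gamma ((1 - η) * s + η * (s + 1)) := by ring_nf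
    _ ≤ Gamma s ^ (1 - η) * Gamma (s + 1) ^ η :=
      Gamma_mul_add_mul_le_rpow_Gamma_mul_rpow_Gamma hs (by linarith) (by linarith) hη_pos
        (by ring)
    _ = Gamma s * s ^ η := by
      rw [Gamma_add_one hs.ne', mul_rpow hs.le hG.le, mul_left_comm, ← rpow_add hG,
        sub_add_cancel, rpow_one, mul_comm]

theorem mul_add_one_rpow_lt_add_mul_rpow {x η : ℝ} (hx : 0 < x) (hη0 : 0 < η) (hη1 : η < 1) :
    x * (x + 1) ^ η < (x + η) * x ^ η := by
  have amgm : x ^ (1 - η) * (x + 1) ^ η < (1 - η) * x + η * (x + 1) :=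
    (geom_mean_lt_arith_mean2_weighted_iff_of_pos (by linarith) hη0 hx.le (by linarith)
      (by ring)).mpr (by linarith)
  calc x * (x + 1) ^ η = x ^ η * (x ^ (1 - η) * (x + 1) ^ η) := by
        rw [← mul_assoc, ← rpow_add hx, add_sub_cancel, rpow_one]
    _ < x ^ η * ((1 - η) * x + η * (x + 1)) := by gcongr
    _ = (x + η) * x ^ η := by ring

end Real

open Real in
/-- Lemma 2.3, inequality (2.7): for `0 < η < 1`, `Γ(x + η) / Γ(x) < x ^ η`. -/
theorem gamma_ratio_lt_rpow (x η : ℝ) (hx : 0 < x) (hη0 : 0 < η) (hη1 : η < 1) :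
    Real.Gamma (x + η) / Real.Gamma x < x ^ η := by
  have hG : 0 < Gamma x := Gamma_pos_of_pos hx
  have hxη : 0 < x + η := by linarith
  have shifted : Gamma (x + 1 + η) ≤ x * Gamma x * (x + 1) ^ η := by
    have := Gamma_add_le_Gamma_mul_rpow (s := x + 1) (by linarith) hη0.le hη1.le
    rwa [Gamma_add_one hx.ne'] at this
  rw [div_lt_iff₀ hG, ← mul_lt_mul_iff_of_pos_left hxη]
  calc (x + η) * Gamma (x + η) = Gamma (x + 1 + η) := by
        rw [add_right_comm, Gamma_add_one hxη.ne']
    _ ≤ x * Gamma x * (x + 1) ^ η := shifted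
    _ < (x + η) * x ^ η * Gamma x := by
      rw [mul_right_comm]
      exact mul_lt_mul_of_pos_right (mul_add_one_rpow_lt_add_mul_rpow hx hη0 hη1) hG
    _ = (x + η) * (x ^ η * Gamma x) := by ring
end

section
/- For every real x > 0 and every real η with η > 1, one has Γ(x + η)/Γ(x) > x^η. -/
private lemma gamma_log_add_one {y : ℝ} (hy : 0 < y) :
    Real.log (Real.Gamma (y + 1)) = Real.log y + Real.log (Real.Gamma y) := by
  rw [Real.Gamma_add_one hy.ne', Real.log_mul hy.ne' (Real.Gamma_pos_of_pos hy).ne']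

private lemma gamma_key (x η : ℝ) (hx : 0 < x) (hη : 1 < η) :
    η * Real.log x < Real.log (Real.Gamma (x + η)) - Real.log (Real.Gamma x) := by
  have hconv := Real.convexOn_log_Gamma
  set s : ℝ := η - 1 with hs
  have hs0 : 0 < s := by simp only [hs]; linarith
  have hxs : 0 < x + s := by linarith
  have hfx1 : Real.log (Real.Gamma (x + 1)) = Real.log x + Real.log (Real.Gamma x) :=
    gamma_log_add_one hx
  have hfxη : Real.log (Real.Gamma (x + η))
      = Real.log (x + s) + Real.log (Real.Gamma (x + s)) := by
    have h2 : x + η = (x + s) + 1 := by rw [hs]; ring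
    rw [h2, gamma_log_add_one hxs]
  rcases le_or_gt s 1 with hcase | hcase
  · -- 1 < η ≤ 2
    have h1 := hconv.2 (Set.mem_Ioi.mpr hxs) (Set.mem_Ioi.mpr (by linarith : (0:ℝ) < x + s + 1))
      hs0.le (by linarith : (0:ℝ) ≤ 1 - s) (by ring)
    have heq : s • (x + s) + (1 - s) • (x + s + 1) = x + 1 := by
      simp only [smul_eq_mul]; ring
    rw [heq] at h1
    simp only [Function.comp_apply, smul_eq_mul] at h1
    have hfxs1 : Real.log (Real.Gamma (x + s + 1))
        = Real.log (x + s) + Real.log (Real.Gamma (x + s)) := gamma_log_add_one hxs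
    rw [hfx1, hfxs1] at h1
    have hlog : Real.log x < Real.log (x + s) := Real.log_lt_log hx (by linarith)
    have hηs : η = 1 + s := by rw [hs]; ring
    rw [hfxη, hηs]
    nlinarith [mul_pos hs0 (sub_pos.mpr hlog)]
  · -- η > 2
    have hinv0 : (0:ℝ) ≤ 1 / s := by positivity
    have hinv1 : 1 / s ≤ 1 := by rw [div_le_one (by linarith)]; linarith
    have h1 := hconv.2 (Set.mem_Ioi.mpr (by linarith : (0:ℝ) < x + 1))
      (Set.mem_Ioi.mpr (by linarith : (0:ℝ) < x + η))
      (by linarith : (0:ℝ) ≤ 1 - 1 / s) hinv0 (by ring)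
    have heq : (1 - 1 / s) • (x + 1) + (1 / s) • (x + η) = x + 2 := by
      simp only [smul_eq_mul]
      have : η = s + 1 := by rw [hs]; ring
      rw [this]; field_simp; ring
    rw [heq] at h1
    simp only [Function.comp_apply, smul_eq_mul] at h1
    have hfx2 : Real.log (Real.Gamma (x + 2))
        = Real.log (x + 1) + Real.log (Real.Gamma (x + 1)) := by
      have h2 : x + 2 = (x + 1) + 1 := by ring
      rw [h2, gamma_log_add_one (by linarith)]
    rw [hfx2, hfx1] at h1
    -- h1 : log(x+1) + (log x + logΓx) ≤ (1-1/s)(log x + logΓx) + (1/s) logΓ(x+η)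
    have hlog : Real.log x < Real.log (x + 1) := Real.log_lt_log hx (by linarith)
    have hηs : η = 1 + s := by rw [hs]; ring
    have h2 := mul_le_mul_of_nonneg_left h1 hs0.le
    have hsne : s ≠ 0 := hs0.ne'
    have hexp : s * ((1 - 1 / s) * (Real.log x + Real.log (Real.Gamma x))
        + 1 / s * Real.log (Real.Gamma (x + η)))
        = (s - 1) * (Real.log x + Real.log (Real.Gamma x))
          + Real.log (Real.Gamma (x + η)) := by
      field_simp
    rw [hexp] at h2
    nlinarith [mul_pos hs0 (sub_pos.mpr hlog), hηs]

/-- Lemma 2.3, inequality (2.8): for `η > 1`, `Γ(x + η) / Γ(x) > x ^ η`. -/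
theorem gamma_ratio_gt_rpow (x η : ℝ) (hx : 0 < x) (hη : 1 < η) :
    Real.Gamma (x + η) / Real.Gamma x > x ^ η := by
  have hΓx : 0 < Real.Gamma x := Real.Gamma_pos_of_pos hx
  have hΓxη : 0 < Real.Gamma (x + η) := Real.Gamma_pos_of_pos (by linarith)
  have key := gamma_key x η hx hη
  have hlogdiv : Real.log (Real.Gamma (x + η) / Real.Gamma x)
      = Real.log (Real.Gamma (x + η)) - Real.log (Real.Gamma x) :=
    Real.log_div hΓxη.ne' hΓx.ne'
  have h1 : x ^ η = Real.exp (η * Real.log x) := by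
    rw [Real.rpow_def_of_pos hx, mul_comm]
  rw [gt_iff_lt, h1]
  calc Real.exp (η * Real.log x)
      < Real.exp (Real.log (Real.Gamma (x + η) / Real.Gamma x)) := by
        rw [Real.exp_lt_exp, hlogdiv]; exact key
    _ = Real.Gamma (x + η) / Real.Gamma x := Real.exp_log (by positivity)
end

section
/- Let K₁ ≥ 1 be a real number and let Δt be a real number with 0 < Δt < (2 + K₁)⁻¹. Then for every nonnegative integer k, Γ(Δt⁻¹)/Γ(Δt⁻¹ − K₁) ≤ (Δt⁻¹)^{K₁}. -/
/-! Write `x` as the convex combination `(x - t) / (t + 1) + t (x + 1) / (t + 1)`. Log-convexity of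
`Γ` and `Γ (x + 1) = x Γ x` give `log Γ x ≤ log Γ (x - t) + t log x`, i.e.
`Γ x ≤ x ^ t Γ (x - t)`; for `x = Δt⁻¹`, `t = K₁` this is the claimed bound. -/

open Real Set

namespace Real

theorem log_Gamma_le_log_Gamma_sub_add_mul_log {x t : ℝ} (ht : 0 ≤ t) (htx : t < x) :
    log (Gamma x) ≤ log (Gamma (x - t)) + t * log x := by
  have hx : 0 < x := by linarith
  have ht1 : 0 < t + 1 := by linarith
  have hconv := convexOn_log_Gamma.2 (mem_Ioi.2 (sub_pos.2 htx))
    (mem_Ioi.2 (by linarith : 0 < x + 1)) (inv_pos.2 ht1).le (div_nonneg ht ht1.le)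
    (by field_simp; ring)
  have hcomb : (t + 1)⁻¹ * (x - t) + t / (t + 1) * (x + 1) = x := by
    field_simp; ring
  simp only [Function.comp_apply, smul_eq_mul] at hconv
  rw [hcomb, Gamma_add_one hx.ne', log_mul hx.ne' (Gamma_pos_of_pos hx).ne'] at hconv
  have := mul_le_mul_of_nonneg_left hconv ht1.le
  field_simp at this
  linarith

theorem Gamma_le_rpow_mul_Gamma_sub {x t : ℝ} (ht : 0 ≤ t) (htx : t < x) :
    Gamma x ≤ x ^ t * Gamma (x - t) := by
  have hx : 0 < x := by linarith
  have hΓ : 0 < Gamma (x - t) := Gamma_pos_of_pos (sub_pos.2 htx)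
  rw [← log_le_log_iff (Gamma_pos_of_pos hx) (by positivity), log_mul (by positivity) hΓ.ne',
    log_rpow hx, add_comm]
  exact log_Gamma_le_log_Gamma_sub_add_mul_log ht htx

end Real

/-- Estimate on `Γ(Δt⁻¹) / Γ(Δt⁻¹ - K₁)` used in the proof of Theorem 3.1. -/
theorem gamma_ratio_le_rpow_inv_step (K₁ Δt : ℝ) (hK₁ : 1 ≤ K₁)
    (hΔt0 : 0 < Δt) (hΔt : Δt < (2 + K₁)⁻¹) :
    ∀ _k : ℕ, Real.Gamma Δt⁻¹ / Real.Gamma (Δt⁻¹ - K₁) ≤ Δt⁻¹ ^ K₁ := by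
  intro _
  have hK₁_lt : K₁ < Δt⁻¹ := by
    have := (lt_inv_comm₀ hΔt0 (by linarith)).1 hΔt
    linarith
  rw [div_le_iff₀ (Real.Gamma_pos_of_pos (sub_pos.2 hK₁_lt))]
  exact Real.Gamma_le_rpow_mul_Gamma_sub (by linarith) hK₁_lt
end

section
/- Let K₁ ≥ 1 be a real number and let Δt be a real number with 0 < Δt < (2 + K₁)⁻¹. Then for every nonnegative integer k, [Γ(k + Δt⁻¹ − K₁)² · Γ(Δt⁻¹)²] / [Γ(k + Δt⁻¹)² · Γ(Δt⁻¹ − K₁)²] ≤ ((k − K₁)Δt + 1)^{−2K₁}. -/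
/-!
With `a = Δt⁻¹`, the base `(k - K₁) Δt + 1` equals `(k + a - K₁) / a`. The function
`f(y) = Γ(y - K) y^K / Γ(y)` satisfies `f(y + 1) / f(y) = (1 - K/y) (1 + 1/y)^K ≤ 1` for `K ≥ 1`
(Bernoulli's inequality), so `f(k + a) ≤ f(a)`. Together with `(k + a - K)^K ≤ (k + a)^K` this bounds
the unsquared ratio by `(a / (k + a - K))^K`; squaring gives the claim.
-/

open Real

theorem sub_mul_add_one_rpow_le_mul_rpow {y K : ℝ} (hy : 0 < y) (hK : 1 ≤ K) :
    (y - K) * (y + 1) ^ K ≤ y * y ^ K := by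
  have hy1 : 0 < y + 1 := by linarith
  have bernoulli : 1 - K / (y + 1) ≤ (y / (y + 1)) ^ K := by
    have hs : -1 ≤ -(1 / (y + 1)) := by
      rw [neg_le_neg_iff, div_le_one hy1]; linarith
    convert one_add_mul_self_le_rpow_one_add hs hK using 2
    · ring
    · field_simp; ring
  rw [div_rpow hy.le hy1.le, le_div_iff₀ (rpow_pos_of_pos hy1 K)] at bernoulli
  have hyK : y - K ≤ y * (1 - K / (y + 1)) := by
    have : y * (1 - K / (y + 1)) = y - K + K / (y + 1) := by field_simp; ring
    rw [this]
    linarith [div_pos (by linarith : (0 : ℝ) < K) hy1]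
  calc (y - K) * (y + 1) ^ K ≤ y * (1 - K / (y + 1)) * (y + 1) ^ K := by gcongr
    _ = y * ((1 - K / (y + 1)) * (y + 1) ^ K) := by ring
    _ ≤ y * y ^ K := by gcongr

noncomputable def gammaRatio (K y : ℝ) : ℝ := Gamma (y - K) * y ^ K / Gamma y

theorem gammaRatio_add_one_le {K y : ℝ} (hK : 1 ≤ K) (hy : K < y) :
    gammaRatio K (y + 1) ≤ gammaRatio K y := by
  have hy0 : 0 < y := by linarith
  unfold gammaRatio
  rw [show y + 1 - K = y - K + 1 by ring, Gamma_add_one (by linarith), Gamma_add_one hy0.ne']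
  calc (y - K) * Gamma (y - K) * (y + 1) ^ K / (y * Gamma y)
      = Gamma (y - K) / Gamma y * ((y - K) * (y + 1) ^ K / y) := by
        field_simp
    _ ≤ Gamma (y - K) / Gamma y * y ^ K := by
        gcongr
        rw [div_le_iff₀' hy0]
        exact sub_mul_add_one_rpow_le_mul_rpow hy0 hK
    _ = Gamma (y - K) * y ^ K / Gamma y := by ring

theorem antitone_gammaRatio_natCast_add {K y : ℝ} (hK : 1 ≤ K) (hy : K < y) :
    Antitone fun n : ℕ ↦ gammaRatio K (n + y) := by
  refine antitone_nat_of_succ_le fun n ↦ ?_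
  rw [Nat.cast_add_one, add_right_comm]
  exact gammaRatio_add_one_le hK (by linarith [(n.cast_nonneg : (0 : ℝ) ≤ n)])

theorem Gamma_mul_Gamma_div_le_div_rpow {K y : ℝ} (hK : 1 ≤ K) (hy : K < y) (n : ℕ) :
    Gamma (n + y - K) * Gamma y / (Gamma (n + y) * Gamma (y - K)) ≤ (y / (n + y - K)) ^ K := by
  have hy0 : 0 < y := by linarith
  have hx : 0 < n + y - K := by linarith [(n.cast_nonneg : (0 : ℝ) ≤ n)]
  have hf := antitone_gammaRatio_natCast_add hK hy (Nat.zero_le n)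
  simp only [gammaRatio, Nat.cast_zero, zero_add] at hf
  rw [div_le_div_iff₀ (Gamma_pos_of_pos (by linarith)) (Gamma_pos_of_pos hy0)] at hf
  rw [div_rpow hy0.le hx.le, div_le_div_iff₀ (by positivity) (rpow_pos_of_pos hx K)]
  calc Gamma (n + y - K) * Gamma y * (n + y - K) ^ K
      ≤ Gamma (n + y - K) * (n + y) ^ K * Gamma y := by
        rw [mul_right_comm]
        gcongr
        linarith
    _ ≤ Gamma (y - K) * y ^ K * Gamma (n + y) := hf
    _ = y ^ K * (Gamma (n + y) * Gamma (y - K)) := by ring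

/-- Estimate (3.6) in the proof of Theorem 3.1. -/
theorem gamma_ratio_sq_le (K₁ Δt : ℝ) (hK₁ : 1 ≤ K₁)
    (hΔt0 : 0 < Δt) (hΔt : Δt < (2 + K₁)⁻¹) :
    ∀ k : ℕ,
      Real.Gamma ((k : ℝ) + Δt⁻¹ - K₁) ^ 2 * Real.Gamma Δt⁻¹ ^ 2 /
          (Real.Gamma ((k : ℝ) + Δt⁻¹) ^ 2 * Real.Gamma (Δt⁻¹ - K₁) ^ 2) ≤
        (((k : ℝ) - K₁) * Δt + 1) ^ (-(2 * K₁)) := by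
  intro k
  have ha : K₁ < Δt⁻¹ := by linarith [(lt_inv_comm₀ hΔt0 (by linarith)).1 hΔt]
  have hx : 0 < k + Δt⁻¹ - K₁ := by linarith [(k.cast_nonneg : (0 : ℝ) ≤ k)]
  have hbase : ((k : ℝ) - K₁) * Δt + 1 = (k + Δt⁻¹ - K₁) / Δt⁻¹ := by
    field_simp; ring
  have hbase_pos : 0 < ((k : ℝ) - K₁) * Δt + 1 := hbase ▸ div_pos hx (by linarith)
  have hratio : Gamma (k + Δt⁻¹ - K₁) * Gamma Δt⁻¹ / (Gamma (k + Δt⁻¹) * Gamma (Δt⁻¹ - K₁)) ≤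
      (((k : ℝ) - K₁) * Δt + 1) ^ (-K₁) := by
    rw [rpow_neg hbase_pos.le, ← inv_rpow hbase_pos.le, hbase, inv_div]
    exact Gamma_mul_Gamma_div_le_div_rpow hK₁ ha k
  calc Gamma (k + Δt⁻¹ - K₁) ^ 2 * Gamma Δt⁻¹ ^ 2 / (Gamma (k + Δt⁻¹) ^ 2 * Gamma (Δt⁻¹ - K₁) ^ 2)
      = (Gamma (k + Δt⁻¹ - K₁) * Gamma Δt⁻¹ / (Gamma (k + Δt⁻¹) * Gamma (Δt⁻¹ - K₁))) ^ 2 := by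
        rw [div_pow, mul_pow, mul_pow]
    _ ≤ ((((k : ℝ) - K₁) * Δt + 1) ^ (-K₁)) ^ 2 := by gcongr
    _ = (((k : ℝ) - K₁) * Δt + 1) ^ (-(2 * K₁)) := by
        rw [← rpow_mul_natCast hbase_pos.le]; ring_nf
end

section
/- Let K₁ ≥ 1 be a real number and let Δt be a real number with 0 < Δt < (2 + K₁)⁻¹. Then for every nonnegative integer r, Γ(r + 1 + Δt⁻¹)/Γ(r + 1 + Δt⁻¹ − K₁) ≤ ((r + 1)Δt + 1)^{K₁} · Δt^{−K₁}. -/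
/-!
Log-convexity of `Γ` on `(0, ∞)` makes its secant slopes increase, so the slope of `log ∘ Γ` over
`[x - a, x]` is at most its slope over `[x, x + 1]`, which is `log x` by `Γ(x + 1) = x Γ(x)`.
Hence `Γ(x) / Γ(x - a) ≤ x ^ a`, and with `x = r + 1 + Δt⁻¹` the right-hand side is
`((r + 1) Δt + 1) ^ K₁ · Δt ^ (-K₁)`.
-/

open Real Set

theorem Real.log_Gamma_sub_log_Gamma_sub_le {x a : ℝ} (ha : 0 < a) (hxa : 0 < x - a) :
    log (Gamma x) - log (Gamma (x - a)) ≤ a * log x := by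
  have hx : 0 < x := by linarith
  have hslope := convexOn_log_Gamma.slope_mono_adjacent (x := x - a) (y := x) (z := x + 1)
    hxa (by simp only [mem_Ioi]; linarith) (by linarith) (by linarith)
  have hstep : log (Gamma (x + 1)) - log (Gamma x) = log x := by
    rw [Gamma_add_one hx.ne', log_mul hx.ne' (Gamma_pos_of_pos hx).ne']
    ring
  simp only [Function.comp_apply, sub_sub_cancel, add_sub_cancel_left, div_one, hstep] at hslope
  rwa [div_le_iff₀' ha] at hslope

theorem Real.Gamma_div_Gamma_sub_le_rpow {x a : ℝ} (ha : 0 ≤ a) (hxa : 0 < x - a) :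
    Gamma x / Gamma (x - a) ≤ x ^ a := by
  rcases ha.eq_or_lt with rfl | ha
  · rw [sub_zero] at hxa
    simp [div_self (Gamma_pos_of_pos hxa).ne']
  have hx : 0 < x := by linarith
  calc Gamma x / Gamma (x - a) = exp (log (Gamma x) - log (Gamma (x - a))) := by
        rw [exp_sub, exp_log (Gamma_pos_of_pos hx), exp_log (Gamma_pos_of_pos hxa)]
    _ ≤ exp (a * log x) := exp_le_exp.mpr (log_Gamma_sub_log_Gamma_sub_le ha hxa)
    _ = x ^ a := by rw [rpow_def_of_pos hx, mul_comm]

theorem Real.mul_add_one_rpow_mul_rpow_neg {t : ℝ} (ht : 0 < t) {y : ℝ} (hy : 0 ≤ y) (a : ℝ) :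
    (y * t + 1) ^ a * t ^ (-a) = (y + t⁻¹) ^ a := by
  rw [rpow_neg ht.le, ← div_eq_mul_inv, ← div_rpow (by positivity) ht.le, add_div,
    mul_div_cancel_right₀ _ ht.ne', one_div]

/-- Estimate preceding (3.7) in the proof of Theorem 3.1. -/
theorem gamma_ratio_shift_le (K₁ Δt : ℝ) (hK₁ : 1 ≤ K₁)
    (hΔt0 : 0 < Δt) (hΔt : Δt < (2 + K₁)⁻¹) :
    ∀ r : ℕ,
      Real.Gamma ((r : ℝ) + 1 + Δt⁻¹) / Real.Gamma ((r : ℝ) + 1 + Δt⁻¹ - K₁) ≤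
        (((r : ℝ) + 1) * Δt + 1) ^ K₁ * Δt ^ (-K₁) := by
  intro r
  have hinv : 2 + K₁ < Δt⁻¹ := (lt_inv_comm₀ hΔt0 (by linarith)).mp hΔt
  rw [mul_add_one_rpow_mul_rpow_neg hΔt0 (by positivity)]
  exact Gamma_div_Gamma_sub_le_rpow (by linarith) (by linarith [(r.cast_nonneg : (0 : ℝ) ≤ r)])
end

section
/- Fix a probability space (Ω, F, ℙ), real numbers K₁ > 0, C > 0 and a step size Δt > 0. Let f, g : ℝⁿ × [0,∞) → ℝⁿ be measurable and satisfy |f(x,t)| ≤ K₁(1+t)⁻¹|x|, ⟨x, f(x,t)⟩ ≤ −K₁(1+t)⁻¹|x|² and |g(x,t)| ≤ C(1+t)^{−K₁} for all x ∈ ℝⁿ and t ≥ 0. Let k be a nonnegative integer, let Y_k be an ℝⁿ-valued random variable with E|Y_k|² < ∞, let ΔB_k be a real Gaussian random variable with mean 0 and variance Δt that is independent of Y_k, and set Y_{k+1} = Y_k + f(Y_k, kΔt)Δt + g(Y_k, kΔt)ΔB_k. Then E|Y_{k+1}|² ≤ (1 − K₁Δt/(1 + kΔt))² E|Y_k|²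 + C²Δt(1 + kΔt)^{−2K₁}. -/
/-!
Write `Y_{k+1} = a(Y_k) + ΔB_k • b(Y_k)` with `a(x) = x + Δt f(x, t)` and `b(x) = g(x, t)`.
Expanding the square, the cross term `2 ΔB_k ⟪a(Y_k), b(Y_k)⟫` has zero mean because `ΔB_k` is
centred and independent of `Y_k`, and the last term has mean `Δt E‖b(Y_k)‖²` for the same reason.
Pointwise, dissipativity and the linear growth of `f` give
`‖x + Δt f(x, t)‖² ≤ (1 - K₁Δt/(1+t))² ‖x‖²`, while `‖g(x, t)‖² ≤ C²(1+t)^{-2K₁}`.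
-/

open MeasureTheory ProbabilityTheory
open scoped NNReal RealInnerProductSpace

namespace ProbabilityTheory

variable {Ω : Type*} [MeasurableSpace Ω] {P : Measure Ω} {B : Ω → ℝ} {v : ℝ≥0}

lemma HasLaw.memLp_two_of_gaussianReal (hB : HasLaw B (gaussianReal 0 v) P) : MemLp B 2 P := by
  have h := memLp_id_gaussianReal (μ := 0) (v := v) 2
  rw [← hB.map_eq] at h
  exact h.comp_of_map hB.aemeasurable

lemma HasLaw.integral_eq_zero_of_gaussianReal (hB : HasLaw B (gaussianReal 0 v) P) :
    ∫ ω, B ω ∂P = 0 := by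
  rw [hB.integral_eq, integral_id_gaussianReal]

lemma HasLaw.integral_sq_eq_of_gaussianReal (hB : HasLaw B (gaussianReal 0 v) P) :
    ∫ ω, B ω ^ 2 ∂P = v := by
  rw [← variance_of_integral_eq_zero hB.aemeasurable hB.integral_eq_zero_of_gaussianReal,
    hB.variance_eq, variance_id_gaussianReal]

end ProbabilityTheory

section InnerProductSpace

variable {E : Type*} [NormedAddCommGroup E] [InnerProductSpace ℝ E]

lemma norm_add_smul_sq_le_of_inner_le {x v : E} {c h : ℝ} (hh : 0 ≤ h) (hv : ‖v‖ ≤ c * ‖x‖)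
    (hxv : ⟪x, v⟫ ≤ -c * ‖x‖ ^ 2) : ‖x + h • v‖ ^ 2 ≤ (1 - c * h) ^ 2 * ‖x‖ ^ 2 := by
  have hv2 : ‖v‖ ^ 2 ≤ (c * ‖x‖) ^ 2 := pow_le_pow_left₀ (norm_nonneg v) hv 2
  rw [norm_add_sq_real, real_inner_smul_right, norm_smul, mul_pow, Real.norm_eq_abs, sq_abs]
  nlinarith [mul_le_mul_of_nonneg_left hxv hh, mul_le_mul_of_nonneg_left hv2 (sq_nonneg h)]

lemma norm_add_smul_sq_eq (x y : E) (b : ℝ) :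
    ‖x + b • y‖ ^ 2 = ‖x‖ ^ 2 + 2 * (⟪x, y⟫ * b) + ‖y‖ ^ 2 * b ^ 2 := by
  rw [norm_add_sq_real, real_inner_smul_right, norm_smul, mul_pow, Real.norm_eq_abs, sq_abs]
  ring

end InnerProductSpace

namespace ProbabilityTheory

variable {Ω α E : Type*} [MeasurableSpace Ω] {P : Measure Ω} [IsProbabilityMeasure P]
  [MeasurableSpace α] [NormedAddCommGroup E] [InnerProductSpace ℝ E] [MeasurableSpace E]
  [BorelSpace E] [SecondCountableTopology E]

theorem IndepFun.integral_norm_add_smul_sq {Y : Ω → α} {B : Ω → ℝ} (hYB : IndepFun Y B P)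
    (hY : Measurable Y) (hB : MemLp B 2 P) (hB0 : ∫ ω, B ω ∂P = 0) {a b : α → E}
    (ha : Measurable a) (hb : Measurable b) (ha2 : Integrable (fun ω => ‖a (Y ω)‖ ^ 2) P)
    (hb2 : Integrable (fun ω => ‖b (Y ω)‖ ^ 2) P) :
    ∫ ω, ‖a (Y ω) + B ω • b (Y ω)‖ ^ 2 ∂P =
      ∫ ω, ‖a (Y ω)‖ ^ 2 ∂P + (∫ ω, B ω ^ 2 ∂P) * ∫ ω, ‖b (Y ω)‖ ^ 2 ∂P := by
  have hab : Measurable fun x => ⟪a x, b x⟫ := ha.inner hb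
  have hbb : Measurable fun x => ‖b x‖ ^ 2 := hb.norm.pow_const 2
  have hab_int : Integrable (fun ω => ⟪a (Y ω), b (Y ω)⟫) P := by
    refine (ha2.add hb2).mono' (hab.comp hY).aestronglyMeasurable (.of_forall fun ω => ?_)
    show |⟪a (Y ω), b (Y ω)⟫| ≤ ‖a (Y ω)‖ ^ 2 + ‖b (Y ω)‖ ^ 2
    refine (abs_real_inner_le_norm _ _).trans ?_
    nlinarith [sq_nonneg (‖a (Y ω)‖ - ‖b (Y ω)‖), norm_nonneg (a (Y ω)), norm_nonneg (b (Y ω))]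
  have hcross_int : Integrable (fun ω => 2 * (⟪a (Y ω), b (Y ω)⟫ * B ω)) P :=
    ((hYB.comp hab measurable_id).integrable_mul hab_int (hB.integrable one_le_two)).const_mul 2
  have hdiff_int : Integrable (fun ω => ‖b (Y ω)‖ ^ 2 * B ω ^ 2) P :=
    (hYB.comp hbb (measurable_id.pow_const 2)).integrable_mul hb2 hB.integrable_sq
  have hcross : ∫ ω, ⟪a (Y ω), b (Y ω)⟫ * B ω ∂P = 0 := by
    rw [hYB.integral_fun_comp_mul_comp (g := fun x => x) hY.aemeasurable hB.aemeasurable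
      hab.aestronglyMeasurable aestronglyMeasurable_id, hB0, mul_zero]
  have hdiff : ∫ ω, ‖b (Y ω)‖ ^ 2 * B ω ^ 2 ∂P =
      (∫ ω, B ω ^ 2 ∂P) * ∫ ω, ‖b (Y ω)‖ ^ 2 ∂P := by
    rw [mul_comm, hYB.integral_fun_comp_mul_comp (g := fun x => x ^ 2) hY.aemeasurable
      hB.aemeasurable hbb.aestronglyMeasurable (measurable_id.pow_const 2).aestronglyMeasurable]
  simp_rw [norm_add_smul_sq_eq]
  rw [integral_add (ha2.fun_add hcross_int) hdiff_int, integral_add ha2 hcross_int,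
    integral_const_mul, hcross, hdiff, mul_zero, add_zero]

theorem IndepFun.integral_norm_add_smul_sq_le_of_gaussianReal {D : Type*} [NormedAddCommGroup D]
    [MeasurableSpace D] {Y : Ω → D} {B : Ω → ℝ} {v : ℝ≥0} (hYB : IndepFun Y B P)
    (hY : Measurable Y) (hY2 : Integrable (fun ω => ‖Y ω‖ ^ 2) P)
    (hB : HasLaw B (gaussianReal 0 v) P) {a b : D → E} (ha : Measurable a) (hb : Measurable b)
    {ρ M : ℝ} (ha_le : ∀ x, ‖a x‖ ^ 2 ≤ ρ * ‖x‖ ^ 2) (hb_le : ∀ x, ‖b x‖ ^ 2 ≤ M) :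
    ∫ ω, ‖a (Y ω) + B ω • b (Y ω)‖ ^ 2 ∂P ≤ ρ * ∫ ω, ‖Y ω‖ ^ 2 ∂P + v * M := by
  have ha2 : Integrable (fun ω => ‖a (Y ω)‖ ^ 2) P :=
    (hY2.const_mul ρ).mono' ((ha.comp hY).norm.pow_const 2).aestronglyMeasurable
      (.of_forall fun ω => by simpa using ha_le (Y ω))
  have hb2 : Integrable (fun ω => ‖b (Y ω)‖ ^ 2) P :=
    (integrable_const M).mono' ((hb.comp hY).norm.pow_const 2).aestronglyMeasurable
      (.of_forall fun ω => by simpa using hb_le (Y ω))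
  have ha_int_le : ∫ ω, ‖a (Y ω)‖ ^ 2 ∂P ≤ ρ * ∫ ω, ‖Y ω‖ ^ 2 ∂P :=
    (integral_mono ha2 (hY2.const_mul ρ) fun ω => ha_le (Y ω)).trans_eq (integral_const_mul _ _)
  have hb_int_le : ∫ ω, ‖b (Y ω)‖ ^ 2 ∂P ≤ M :=
    (integral_mono hb2 (integrable_const M) fun ω => hb_le (Y ω)).trans_eq (by simp)
  rw [hYB.integral_norm_add_smul_sq hY hB.memLp_two_of_gaussianReal
    hB.integral_eq_zero_of_gaussianReal ha hb ha2 hb2, hB.integral_sq_eq_of_gaussianReal]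
  gcongr

end ProbabilityTheory

theorem em_one_step_second_moment_general {Ω : Type*} [MeasurableSpace Ω]
    (P : Measure Ω) [IsProbabilityMeasure P] {n : ℕ}
    (K₁ C Δt : ℝ) (hΔt : 0 < Δt)
    (f g : EuclideanSpace ℝ (Fin n) → ℝ → EuclideanSpace ℝ (Fin n))
    (hf_meas : Measurable fun p : EuclideanSpace ℝ (Fin n) × ℝ => f p.1 p.2)
    (hg_meas : Measurable fun p : EuclideanSpace ℝ (Fin n) × ℝ => g p.1 p.2)
    (hf_growth : ∀ (x : EuclideanSpace ℝ (Fin n)) (t : ℝ), 0 ≤ t →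
      ‖f x t‖ ≤ K₁ * (1 + t)⁻¹ * ‖x‖)
    (hf_diss : ∀ (x : EuclideanSpace ℝ (Fin n)) (t : ℝ), 0 ≤ t →
      ⟪x, f x t⟫ ≤ -K₁ * (1 + t)⁻¹ * ‖x‖ ^ 2)
    (hg_growth : ∀ (x : EuclideanSpace ℝ (Fin n)) (t : ℝ), 0 ≤ t →
      ‖g x t‖ ≤ C * (1 + t) ^ (-K₁))
    (k : ℕ) (Yk Yk1 : Ω → EuclideanSpace ℝ (Fin n))
    (hYk_meas : Measurable Yk)
    (hYk_sq : Integrable (fun ω => ‖Yk ω‖ ^ 2) P)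
    (ΔB : Ω → ℝ) (hΔB_meas : Measurable ΔB)
    (hΔB_law : P.map ΔB = gaussianReal 0 ⟨Δt, hΔt.le⟩)
    (hindep : IndepFun Yk ΔB P)
    (hstep : ∀ ω, Yk1 ω =
      Yk ω + Δt • f (Yk ω) ((k : ℝ) * Δt) + ΔB ω • g (Yk ω) ((k : ℝ) * Δt)) :
    ∫ ω, ‖Yk1 ω‖ ^ 2 ∂P ≤
      (1 - K₁ * Δt / (1 + (k : ℝ) * Δt)) ^ 2 * ∫ ω, ‖Yk ω‖ ^ 2 ∂P +
        C ^ 2 * Δt * (1 + (k : ℝ) * Δt) ^ (-(2 * K₁)) := by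
  set t : ℝ := (k : ℝ) * Δt
  have ht : 0 ≤ t := by positivity
  have hB : HasLaw ΔB (gaussianReal 0 ⟨Δt, hΔt.le⟩) P := ⟨hΔB_meas.aemeasurable, hΔB_law⟩
  have hdrift (x) : ‖x + Δt • f x t‖ ^ 2 ≤ (1 - K₁ * Δt / (1 + t)) ^ 2 * ‖x‖ ^ 2 := by
    rw [show K₁ * Δt / (1 + t) = K₁ * (1 + t)⁻¹ * Δt by ring]
    exact norm_add_smul_sq_le_of_inner_le hΔt.le (hf_growth x t ht)
      ((hf_diss x t ht).trans_eq (by ring))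
  have hdiff (x) : ‖g x t‖ ^ 2 ≤ C ^ 2 * (1 + t) ^ (-(2 * K₁)) := by
    rw [show -(2 * K₁) = -K₁ * (2 : ℕ) by push_cast; ring,
      Real.rpow_mul_natCast (by positivity), ← mul_pow]
    exact pow_le_pow_left₀ (norm_nonneg _) (hg_growth x t ht) 2
  have hfm : Measurable fun x => x + Δt • f x t :=
    measurable_id.add ((hf_meas.comp (measurable_id.prodMk measurable_const)).const_smul Δt)
  have hgm : Measurable fun x => g x t := hg_meas.comp (measurable_id.prodMk measurable_const)
  simp_rw [hstep]
  refine (hindep.integral_norm_add_smul_sq_le_of_gaussianReal hYk_meas hYk_sq hB hfm hgm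
    hdrift hdiff).trans_eq ?_
  change _ + Δt * _ = _
  ring

/-- One-step second-moment estimate for the Euler–Maruyama method
(proof of Theorem 3.1). -/
theorem em_one_step_second_moment {Ω : Type*} [MeasurableSpace Ω]
    (P : Measure Ω) [IsProbabilityMeasure P] {n : ℕ}
    (K₁ C Δt : ℝ) (hK₁ : 0 < K₁) (hC : 0 < C) (hΔt : 0 < Δt)
    (f g : EuclideanSpace ℝ (Fin n) → ℝ → EuclideanSpace ℝ (Fin n))
    (hf_meas : Measurable fun p : EuclideanSpace ℝ (Fin n) × ℝ => f p.1 p.2)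
    (hg_meas : Measurable fun p : EuclideanSpace ℝ (Fin n) × ℝ => g p.1 p.2)
    (hf_growth : ∀ (x : EuclideanSpace ℝ (Fin n)) (t : ℝ), 0 ≤ t →
      ‖f x t‖ ≤ K₁ * (1 + t)⁻¹ * ‖x‖)
    (hf_diss : ∀ (x : EuclideanSpace ℝ (Fin n)) (t : ℝ), 0 ≤ t →
      ⟪x, f x t⟫ ≤ -K₁ * (1 + t)⁻¹ * ‖x‖ ^ 2)
    (hg_growth : ∀ (x : EuclideanSpace ℝ (Fin n)) (t : ℝ), 0 ≤ t →
      ‖g x t‖ ≤ C * (1 + t) ^ (-K₁))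
    (k : ℕ) (Yk Yk1 : Ω → EuclideanSpace ℝ (Fin n))
    (hYk_meas : Measurable Yk)
    (hYk_sq : Integrable (fun ω => ‖Yk ω‖ ^ 2) P)
    (ΔB : Ω → ℝ) (hΔB_meas : Measurable ΔB)
    (hΔB_law : P.map ΔB = gaussianReal 0 ⟨Δt, hΔt.le⟩)
    (hindep : IndepFun Yk ΔB P)
    (hstep : ∀ ω, Yk1 ω =
      Yk ω + Δt • f (Yk ω) ((k : ℝ) * Δt) + ΔB ω • g (Yk ω) ((k : ℝ) * Δt)) :
    ∫ ω, ‖Yk1 ω‖ ^ 2 ∂P ≤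
      (1 - K₁ * Δt / (1 + (k : ℝ) * Δt)) ^ 2 * ∫ ω, ‖Yk ω‖ ^ 2 ∂P +
        C ^ 2 * Δt * (1 + (k : ℝ) * Δt) ^ (-(2 * K₁)) :=
  em_one_step_second_moment_general P K₁ C Δt hΔt f g hf_meas hg_meas hf_growth hf_diss hg_growth k
    Yk Yk1 hYk_meas hYk_sq ΔB hΔB_meas hΔB_law hindep hstep
end

section
/- Let K₁ ≥ 1 be a real number, let Δt be a real number with 0 < Δt < (2 + K₁)⁻¹, and let C > 0. Suppose (a_k)_{k≥0} is a sequence of nonnegative real numbers satisfying a_{k+1} ≤ (1 − K₁Δt/(1 + kΔt))² a_k + C²Δt(1 + kΔt)^{−2K₁} for every k ≥ 0. Then for every k ≥ 0, a_k ≤ (kΔt + 1)^{−2K₁+1} (a_0 + C²(1 + Δt)^{2K₁}). -/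
/-!
With `t = 1 + kΔt` and `M = a₀ + C²(1 + Δt)^(2K₁)`, the bound `a_k ≤ t^(1 - 2K₁) M` propagates because the two terms of the
recursion are dominated by the two parts of `(t + Δt)^(1 - 2K₁) M = t (t + Δt)^(-2K₁) M +
Δt (t + Δt)^(-2K₁) M`: Bernoulli's inequality `(1 - K₁u)² ≤ (1 + u)^(-2K₁)` with `u = Δt / t`
handles the contraction, and `t + Δt ≤ t (1 + Δt)` handles the forcing term, which is where the
factor `(1 + Δt)^(2K₁)` in `M` comes from.
-/

open Real

lemma one_sub_mul_le_rpow_neg {p u : ℝ} (hp : 0 ≤ p) (hu : 0 ≤ u) :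
    1 - p * u ≤ (1 + u) ^ (-p) := by
  have hlog : log (1 + u) ≤ u := by linarith [log_le_sub_one_of_pos (by linarith : 0 < 1 + u)]
  calc 1 - p * u ≤ log (1 + u) * -p + 1 := by nlinarith
    _ ≤ (1 + u) ^ (-p) := by rw [rpow_def_of_pos (by linarith)]; exact add_one_le_exp _

lemma one_sub_mul_sq_le_rpow_neg {p u : ℝ} (hp : 0 ≤ p) (hu : 0 ≤ u) (hpu : p * u ≤ 1) :
    (1 - p * u) ^ 2 ≤ (1 + u) ^ (-(2 * p)) := by
  calc (1 - p * u) ^ 2 ≤ ((1 + u) ^ (-p)) ^ 2 := by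
        gcongr
        exact one_sub_mul_le_rpow_neg hp hu
    _ = (1 + u) ^ (-(2 * p)) := by
        rw [← rpow_natCast, ← rpow_mul (by linarith)]
        norm_num [mul_comm]

lemma rpow_neg_le_rpow_mul_rpow_neg_add {p h t : ℝ} (hp : 0 ≤ p) (hh : 0 ≤ h) (ht : 1 ≤ t) :
    t ^ (-p) ≤ (1 + h) ^ p * (t + h) ^ (-p) := by
  have ht0 : 0 < t := by linarith
  rw [rpow_neg ht0.le, rpow_neg (by linarith), ← inv_rpow ht0.le, ← div_eq_mul_inv,
    ← div_rpow (by linarith) (by linarith)]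
  gcongr
  rw [inv_eq_one_div, div_le_div_iff₀ ht0 (by linarith)]
  nlinarith

lemma sq_one_sub_div_mul_rpow_le {K Δt t M : ℝ} (hK : 0 ≤ K) (hΔt : 0 ≤ Δt) (hKΔt : K * Δt ≤ 1)
    (ht : 1 ≤ t) (hM : 0 ≤ M) :
    (1 - K * Δt / t) ^ 2 * (t ^ (-(2 * K) + 1) * M) ≤ t * (t + Δt) ^ (-(2 * K)) * M := by
  have ht0 : 0 < t := by linarith
  have hu : 0 ≤ Δt / t := by positivity
  have hKu : K * (Δt / t) ≤ 1 := by
    calc K * (Δt / t) ≤ K * Δt := by gcongr; exact div_le_self hΔt ht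
      _ ≤ 1 := hKΔt
  have hsplit : t + Δt = t * (1 + Δt / t) := by field_simp
  calc (1 - K * Δt / t) ^ 2 * (t ^ (-(2 * K) + 1) * M)
      = (1 - K * (Δt / t)) ^ 2 * (t ^ (-(2 * K)) * t * M) := by
        rw [rpow_add ht0, rpow_one, mul_div_assoc]
    _ ≤ (1 + Δt / t) ^ (-(2 * K)) * (t ^ (-(2 * K)) * t * M) := by
        gcongr
        exact one_sub_mul_sq_le_rpow_neg hK hu hKu
    _ = t * (t + Δt) ^ (-(2 * K)) * M := by
        rw [hsplit, mul_rpow ht0.le (by linarith)]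
        ring

lemma em_step_bound {K Δt C M t x : ℝ} (hK : 0 ≤ K) (hΔt : 0 ≤ Δt) (hKΔt : K * Δt ≤ 1)
    (ht : 1 ≤ t) (hM : C ^ 2 * (1 + Δt) ^ (2 * K) ≤ M) (hx : x ≤ t ^ (-(2 * K) + 1) * M) :
    (1 - K * Δt / t) ^ 2 * x + C ^ 2 * Δt * t ^ (-(2 * K)) ≤ (t + Δt) ^ (-(2 * K) + 1) * M := by
  have hs : 0 < t + Δt := by linarith
  have hM0 : 0 ≤ M := le_trans (by positivity) hM
  have hforcing : C ^ 2 * Δt * t ^ (-(2 * K)) ≤ Δt * (t + Δt) ^ (-(2 * K)) * M := by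
    calc C ^ 2 * Δt * t ^ (-(2 * K))
        ≤ C ^ 2 * Δt * ((1 + Δt) ^ (2 * K) * (t + Δt) ^ (-(2 * K))) := by
          gcongr
          exact rpow_neg_le_rpow_mul_rpow_neg_add (by positivity) hΔt ht
      _ = Δt * (t + Δt) ^ (-(2 * K)) * (C ^ 2 * (1 + Δt) ^ (2 * K)) := by ring
      _ ≤ Δt * (t + Δt) ^ (-(2 * K)) * M := by gcongr
  calc (1 - K * Δt / t) ^ 2 * x + C ^ 2 * Δt * t ^ (-(2 * K))
      ≤ t * (t + Δt) ^ (-(2 * K)) * M + Δt * (t + Δt) ^ (-(2 * K)) * M := by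
        refine add_le_add ?_ hforcing
        exact (mul_le_mul_of_nonneg_left hx (sq_nonneg _)).trans
          (sq_one_sub_div_mul_rpow_le hK hΔt hKΔt ht hM0)
    _ = (t + Δt) ^ (-(2 * K) + 1) * M := by
        rw [rpow_add hs, rpow_one]
        ring

theorem em_recursion_polynomial_decay_general (K₁ Δt C : ℝ) (hK₁ : 1 ≤ K₁)
    (hΔt0 : 0 < Δt) (hΔt : Δt < (2 + K₁)⁻¹)
    (a : ℕ → ℝ) (ha : ∀ k, 0 ≤ a k)
    (hrec : ∀ k : ℕ, a (k + 1) ≤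
      (1 - K₁ * Δt / (1 + (k : ℝ) * Δt)) ^ 2 * a k +
        C ^ 2 * Δt * (1 + (k : ℝ) * Δt) ^ (-(2 * K₁))) :
    ∀ k : ℕ, a k ≤ ((k : ℝ) * Δt + 1) ^ (-(2 * K₁) + 1) *
      (a 0 + C ^ 2 * (1 + Δt) ^ (2 * K₁)) := by
  have hK : 0 ≤ K₁ := by linarith
  have hKΔt : K₁ * Δt ≤ 1 := by
    rw [← one_div, lt_div_iff₀ (by linarith)] at hΔt
    nlinarith
  have hM : C ^ 2 * (1 + Δt) ^ (2 * K₁) ≤ a 0 + C ^ 2 * (1 + Δt) ^ (2 * K₁) :=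
    le_add_of_nonneg_left (ha 0)
  intro k
  induction k with
  | zero => simpa using (by positivity : 0 ≤ C ^ 2 * (1 + Δt) ^ (2 * K₁))
  | succ k ih =>
    have ht : 1 ≤ 1 + (k : ℝ) * Δt := le_add_of_nonneg_right (by positivity)
    rw [add_comm ((k : ℝ) * Δt)] at ih
    calc a (k + 1) ≤ _ := hrec k
      _ ≤ (1 + k * Δt + Δt) ^ (-(2 * K₁) + 1) * (a 0 + C ^ 2 * (1 + Δt) ^ (2 * K₁)) :=
          em_step_bound hK hΔt0.le hKΔt ht hM ih
      _ = _ := by push_cast; ring_nf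

/-- The deterministic recursion underlying the Euler–Maruyama second moment analysis
(Theorem 3.1). -/
theorem em_recursion_polynomial_decay (K₁ Δt C : ℝ) (hK₁ : 1 ≤ K₁)
    (hΔt0 : 0 < Δt) (hΔt : Δt < (2 + K₁)⁻¹) (hC : 0 < C)
    (a : ℕ → ℝ) (ha : ∀ k, 0 ≤ a k)
    (hrec : ∀ k : ℕ, a (k + 1) ≤
      (1 - K₁ * Δt / (1 + (k : ℝ) * Δt)) ^ 2 * a k +
        C ^ 2 * Δt * (1 + (k : ℝ) * Δt) ^ (-(2 * K₁))) :
    ∀ k : ℕ, a k ≤ ((k : ℝ) * Δt + 1) ^ (-(2 * K₁) + 1) *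
      (a 0 + C ^ 2 * (1 + Δt) ^ (2 * K₁)) :=
  em_recursion_polynomial_decay_general K₁ Δt C hK₁ hΔt0 hΔt a ha hrec
end

section
/- Fix a probability space (Ω, F, ℙ) and a step size Δt with 0 < Δt < 0.5. Let (ΔB_k)_{k≥0} be independent real Gaussian random variables, each with mean 0 and variance Δt, and define the real-valued Euler–Maruyama sequence for the SDE dx = ((−3x − x³)/(1+t))dt + (1+t)^{−3}dB by Y_0 ∈ ℝ (deterministic, arbitrary) and Y_{k+1} = Y_k + ((−3Y_k − Y_k³)/(1 + kΔt))Δt + (1 + kΔt)^{−3}ΔB_k. Then E|Y_k| → ∞ as k → ∞. -/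
/-!
On the event that the first Brownian increment forces `|Y_1| ≥ r` and the next `M` ones lie in
`[-1, 1]`, the cubic drift makes every step overshoot: once `|Y_k| Δt ≥ 3 (1 + k Δt)`, one step gives
`|Y_{k+1}| ≥ Y_k²`, so `|Y_{M+1}| ≥ r ^ 2 ^ M`. By independence this event has probability
`p q ^ M` with `p, q > 0`, hence `E|Y_{M+1}| ≥ r ^ 2 ^ M p q ^ M ≥ p 2 ^ M` as soon as `r q ≥ 2`.
Each `Y_k` is a polynomial in Gaussian increments, so it has finite moments and these
expectations are genuine integrals.
-/

open MeasureTheory ProbabilityTheory Filter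
open scoped NNReal ENNReal

def HasFiniteMoments {Ω : Type*} [MeasurableSpace Ω] (X : Ω → ℝ) (μ : Measure Ω) : Prop :=
  ∀ p : ℝ≥0, MemLp X p μ

namespace HasFiniteMoments

variable {Ω : Type*} [MeasurableSpace Ω] {μ : Measure Ω} {X Z : Ω → ℝ}

lemma integrable (hX : HasFiniteMoments X μ) : Integrable X μ :=
  memLp_one_iff_integrable.mp (by simpa using hX 1)

lemma const [IsFiniteMeasure μ] (c : ℝ) : HasFiniteMoments (fun _ ↦ c) μ :=
  fun _ ↦ memLp_const c

lemma add (hX : HasFiniteMoments X μ) (hZ : HasFiniteMoments Z μ) :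
    HasFiniteMoments (fun ω ↦ X ω + Z ω) μ :=
  fun p ↦ (hX p).add (hZ p)

lemma const_mul (hX : HasFiniteMoments X μ) (c : ℝ) :
    HasFiniteMoments (fun ω ↦ c * X ω) μ :=
  fun p ↦ (hX p).const_mul c

lemma sub (hX : HasFiniteMoments X μ) (hZ : HasFiniteMoments Z μ) :
    HasFiniteMoments (fun ω ↦ X ω - Z ω) μ :=
  fun p ↦ (hX p).sub (hZ p)

lemma mul_const (hX : HasFiniteMoments X μ) (c : ℝ) :
    HasFiniteMoments (fun ω ↦ X ω * c) μ :=
  fun p ↦ (hX p).mul_const c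

lemma div_const (hX : HasFiniteMoments X μ) (c : ℝ) :
    HasFiniteMoments (fun ω ↦ X ω / c) μ := by
  simpa only [div_eq_mul_inv] using hX.mul_const c⁻¹

lemma mul (hX : HasFiniteMoments X μ) (hZ : HasFiniteMoments Z μ) :
    HasFiniteMoments (fun ω ↦ X ω * Z ω) μ := by
  intro p
  have : ENNReal.HolderTriple (2 * p : ℝ≥0) (2 * p : ℝ≥0) p := by
    refine ⟨?_⟩
    rw [ENNReal.coe_mul, ENNReal.mul_inv (by simp) (by simp), ← two_mul, ← mul_assoc]
    simp [ENNReal.mul_inv_cancel]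
  exact (hZ (2 * p)).mul' (hX (2 * p))

lemma pow [IsFiniteMeasure μ] (hX : HasFiniteMoments X μ) (n : ℕ) :
    HasFiniteMoments (fun ω ↦ X ω ^ n) μ := by
  induction n with
  | zero => simpa using const (μ := μ) 1
  | succ n ih => simpa only [pow_succ] using ih.mul hX

end HasFiniteMoments

lemma hasFiniteMoments_of_map_eq_gaussianReal {Ω : Type*} [MeasurableSpace Ω] {μ : Measure Ω}
    {X : Ω → ℝ} (hX : Measurable X) {m : ℝ} {v : ℝ≥0} (hlaw : μ.map X = gaussianReal m v) :
    HasFiniteMoments X μ := fun p ↦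
  (memLp_map_measure_iff aestronglyMeasurable_id hX.aemeasurable).mp
    (hlaw ▸ memLp_id_gaussianReal p)

noncomputable def emStep (Δt : ℝ) (k : ℕ) (x b : ℝ) : ℝ :=
  x + (-3 * x - x ^ 3) / (1 + k * Δt) * Δt + ((1 + k * Δt) ^ 3)⁻¹ * b

lemma emStep_zero (Δt x b : ℝ) : emStep Δt 0 x b = emStep Δt 0 x 0 + b := by
  simp [emStep]

lemma sq_le_abs_emStep {Δt x b : ℝ} {k : ℕ} (hΔt : 0 < Δt)
    (hx : 3 * (1 + k * Δt) ≤ |x| * Δt) (hb : |b| ≤ 1) : x ^ 2 ≤ |emStep Δt k x b| := by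
  set D : ℝ := 1 + k * Δt
  have hD : 1 ≤ D := le_add_of_nonneg_right (by positivity)
  set t := Δt / D
  have ht : 0 < t := by positivity
  have hxt : 3 ≤ |x| * t := by rw [← mul_div_assoc, le_div_iff₀ (by linarith)]; exact hx
  have hdrift : emStep Δt k x b - (D ^ 3)⁻¹ * b = -x * ((3 + x ^ 2) * t - 1) := by
    simp only [emStep, t]; field_simp; ring
  have hnoise : |(D ^ 3)⁻¹ * b| ≤ 1 := by
    rw [abs_mul, abs_of_pos (by positivity)]
    exact mul_le_one₀ (inv_le_one_of_one_le₀ (one_le_pow₀ hD)) (abs_nonneg b) hb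
  have hgrowth : |x| * ((3 + x ^ 2) * t - 1) ≤ |emStep Δt k x b| + 1 := by
    have := abs_sub (emStep Δt k x b) ((D ^ 3)⁻¹ * b)
    rw [hdrift, abs_mul, abs_neg] at this
    nlinarith [mul_le_mul_of_nonneg_left (le_abs_self ((3 + x ^ 2) * t - 1)) (abs_nonneg x)]
  have hcube : 3 * x ^ 2 ≤ x ^ 2 * (|x| * t) := by nlinarith [sq_nonneg x]
  nlinarith [sq_abs x, abs_nonneg x]

lemma pow_two_pow_le_abs_of_sq_le {x : ℕ → ℝ} {r : ℝ} (hr : 0 ≤ r) (h0 : r ≤ |x 0|) {M : ℕ}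
    (hstep : ∀ m < M, r ^ 2 ^ m ≤ |x m| → x m ^ 2 ≤ |x (m + 1)|) : r ^ 2 ^ M ≤ |x M| := by
  induction M with
  | zero => simpa using h0
  | succ M ih =>
    have hM := ih fun m hm ↦ hstep m (by omega)
    calc r ^ 2 ^ (M + 1) = (r ^ 2 ^ M) ^ 2 := by rw [pow_succ, pow_mul]
      _ ≤ |x M| ^ 2 := by gcongr
      _ = x M ^ 2 := sq_abs _
      _ ≤ |x (M + 1)| := hstep M (by omega) hM

lemma three_mul_one_add_le_pow_two_pow_mul {Δt r : ℝ} (hΔt : 0 < Δt) (hr : 3 / Δt + 3 ≤ r)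
    (m : ℕ) : 3 * (1 + (m + 1 : ℕ) * Δt) ≤ r ^ 2 ^ m * Δt := by
  have hr3 : 3 ≤ r := le_trans (le_add_of_nonneg_left (by positivity)) hr
  have hrm : (m + 1 : ℝ) ≤ r ^ m := by
    have := one_add_mul_le_pow (a := r - 1) (by linarith) m
    rw [add_sub_cancel] at this
    nlinarith [(m.cast_nonneg : (0 : ℝ) ≤ m)]
  have hΔt3 : 3 / Δt * Δt = 3 := div_mul_cancel₀ _ hΔt.ne'
  push_cast
  calc 3 * (1 + (m + 1) * Δt) ≤ r ^ m * (3 / Δt + 3) * Δt := by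
        nlinarith [one_le_pow₀ (by linarith : (1 : ℝ) ≤ r) (n := m)]
    _ ≤ r ^ (m + 1) * Δt := by rw [pow_succ]; gcongr
    _ ≤ r ^ 2 ^ m * Δt := by gcongr; exacts [by linarith, Nat.lt_two_pow_self]

lemma pow_two_pow_le_abs_em {Δt r : ℝ} (hΔt : 0 < Δt) (hr : 3 / Δt + 3 ≤ r)
    {y b : ℕ → ℝ} (hy : ∀ k, y (k + 1) = emStep Δt k (y k) (b k)) (hy1 : r ≤ |y 1|) {M : ℕ}
    (hb : ∀ j ∈ Finset.Icc 1 M, |b j| ≤ 1) : r ^ 2 ^ M ≤ |y (M + 1)| := by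
  have hr0 : 0 ≤ r := le_trans (by positivity) hr
  refine pow_two_pow_le_abs_of_sq_le (x := fun m ↦ y (m + 1)) hr0 hy1 fun m hm hym ↦ ?_
  rw [hy (m + 1)]
  refine sq_le_abs_emStep hΔt ?_ (hb (m + 1) (by simp; omega))
  exact (three_mul_one_add_le_pow_two_pow_mul hΔt hr m).trans (by gcongr)

lemma measureReal_gaussianReal_pos (m : ℝ) {v : ℝ≥0} (hv : v ≠ 0) {s : Set ℝ}
    (hs : volume s ≠ 0) : 0 < (gaussianReal m v).real s :=
  ENNReal.toReal_pos (fun h ↦ hs (gaussianReal_absolutelyContinuous' m hv h)) (measure_ne_top _ _)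

section EulerMaruyama

variable {Ω : Type*} [MeasurableSpace Ω] {P : Measure Ω} {ξ : ℕ → Ω → ℝ} {ν : Measure ℝ}

lemma ProbabilityTheory.iIndepFun.measure_first_mem_and_forall_mem (hξ : ∀ k, Measurable (ξ k))
    (hind : iIndepFun ξ P) (hlaw : ∀ k, P.map (ξ k) = ν) {s₀ s : Set ℝ}
    (hs₀ : MeasurableSet s₀) (hs : MeasurableSet s) (M : ℕ) :
    P {ω | ξ 0 ω ∈ s₀ ∧ ∀ j ∈ Finset.Icc 1 M, ξ j ω ∈ s} = ν s₀ * ν s ^ M := by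
  let S : ℕ → Set ℝ := fun j ↦ if j = 0 then s₀ else s
  have hS : ∀ j, MeasurableSet (S j) := fun j ↦ by by_cases hj : j = 0 <;> simp [S, hj, hs₀, hs]
  have hevent : {ω | ξ 0 ω ∈ s₀ ∧ ∀ j ∈ Finset.Icc 1 M, ξ j ω ∈ s}
      = ⋂ j ∈ Finset.range (M + 1), ξ j ⁻¹' S j := by
    ext ω
    simp only [Set.mem_ofPred_eq, Set.mem_iInter, Set.mem_preimage, Finset.mem_range,
      Finset.mem_Icc, S]
    refine ⟨fun ⟨h₀, h⟩ j hj ↦ ?_, fun h ↦ ⟨by simpa using h 0 (by omega), fun j hj ↦ ?_⟩⟩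
    · split_ifs with hj₀
      · exact hj₀ ▸ h₀
      · exact h j ⟨by omega, by omega⟩
    · simpa [show j ≠ 0 by omega] using h j (by omega)
  rw [hevent, hind.measure_inter_preimage_eq_mul _ fun j _ ↦ hS j, Finset.prod_range_succ']
  simp_rw [← Measure.map_apply (hξ _) (hS _), hlaw, S]
  simp [mul_comm]


variable {Y : ℕ → Ω → ℝ} {Δt : ℝ}

lemma hasFiniteMoments_em [IsFiniteMeasure P] (hξ : ∀ k, HasFiniteMoments (ξ k) P)
    (hY : ∀ k ω, Y (k + 1) ω = emStep Δt k (Y k ω) (ξ k ω)) (hY0 : HasFiniteMoments (Y 0) P) :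
    ∀ k, HasFiniteMoments (Y k) P
  | 0 => hY0
  | k + 1 => by
    have hX := hasFiniteMoments_em hξ hY hY0 k
    rw [show Y (k + 1) = _ from funext (hY k)]
    exact (hX.add (((hX.const_mul (-3)).sub (hX.pow 3)).div_const _ |>.mul_const Δt)).add
      ((hξ k).const_mul _)

lemma pow_two_pow_mul_le_integral_abs_em [IsFiniteMeasure P] (hΔt : 0 < Δt) {r : ℝ}
    (hr : 3 / Δt + 3 ≤ r) (hξ : ∀ k, Measurable (ξ k)) (hind : iIndepFun ξ P)
    (hlaw : ∀ k, P.map (ξ k) = ν) (hY : ∀ k ω, Y (k + 1) ω = emStep Δt k (Y k ω) (ξ k ω))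
    {y₀ : ℝ} (hY0 : ∀ ω, Y 0 ω = y₀) {M : ℕ} (hint : Integrable (Y (M + 1)) P) :
    r ^ 2 ^ M * (ν.real (Set.Ici (r + |emStep Δt 0 y₀ 0|)) * ν.real (Set.Icc (-1) 1) ^ M)
      ≤ ∫ ω, |Y (M + 1) ω| ∂P := by
  have hr0 : 0 ≤ r := le_trans (by positivity) hr
  set s := r + |emStep Δt 0 y₀ 0|
  have hsub : {ω | ξ 0 ω ∈ Set.Ici s ∧ ∀ j ∈ Finset.Icc 1 M, ξ j ω ∈ Set.Icc (-1) 1}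
      ⊆ {ω | r ^ 2 ^ M ≤ |Y (M + 1) ω|} := by
    rintro ω ⟨h₀, hsmall⟩
    refine pow_two_pow_le_abs_em (y := fun k ↦ Y k ω) hΔt hr (fun k ↦ hY k ω) ?_ fun j hj ↦ abs_le.mpr (hsmall j hj)
    rw [hY, hY0, emStep_zero]
    have := abs_sub_abs_le_abs_sub (ξ 0 ω) (-emStep Δt 0 y₀ 0)
    rw [abs_neg, sub_neg_eq_add, add_comm] at this
    linarith [le_abs_self (ξ 0 ω), Set.mem_Ici.mp h₀]
  have hprob := hind.measure_first_mem_and_forall_mem hξ hlaw measurableSet_Ici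
    measurableSet_Icc (s₀ := Set.Ici s) (s := Set.Icc (-1) 1) M
  calc r ^ 2 ^ M * (ν.real (Set.Ici s) * ν.real (Set.Icc (-1) 1) ^ M)
      = r ^ 2 ^ M * P.real {ω | ξ 0 ω ∈ Set.Ici s ∧ ∀ j ∈ Finset.Icc 1 M, ξ j ω ∈ Set.Icc (-1) 1} := by
        simp only [measureReal_def, hprob, ENNReal.toReal_mul, ENNReal.toReal_pow]
    _ ≤ r ^ 2 ^ M * P.real {ω | r ^ 2 ^ M ≤ |Y (M + 1) ω|} :=
        mul_le_mul_of_nonneg_left (measureReal_mono hsub) (pow_nonneg hr0 _)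
    _ ≤ ∫ ω, |Y (M + 1) ω| ∂P :=
        mul_meas_ge_le_integral_of_nonneg (ae_of_all _ fun _ ↦ abs_nonneg _) hint.abs _

end EulerMaruyama

theorem em_counterexample_blowup_general {Ω : Type*} [MeasurableSpace Ω]
    (P : Measure Ω) [IsProbabilityMeasure P]
    (Δt : ℝ) (hΔt0 : 0 < Δt)
    (ΔB : ℕ → Ω → ℝ) (hΔB_meas : ∀ k, Measurable (ΔB k))
    (hΔB_indep : iIndepFun ΔB P)
    (hΔB_law : ∀ k, P.map (ΔB k) = gaussianReal 0 ⟨Δt, hΔt0.le⟩)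
    (Y : ℕ → Ω → ℝ)
    (Y0 : ℝ) (hY0 : ∀ ω, Y 0 ω = Y0)
    (hstep : ∀ (k : ℕ) (ω : Ω), Y (k + 1) ω =
      Y k ω + (-3 * Y k ω - (Y k ω) ^ 3) / (1 + (k : ℝ) * Δt) * Δt +
        ((1 + (k : ℝ) * Δt) ^ 3)⁻¹ * ΔB k ω) :
    Tendsto (fun k : ℕ => ∫ ω, |Y k ω| ∂P) atTop atTop := by
  have hv : (⟨Δt, hΔt0.le⟩ : ℝ≥0) ≠ 0 := ne_of_gt hΔt0
  have hmom : ∀ k, HasFiniteMoments (Y k) P :=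
    hasFiniteMoments_em (fun k ↦ hasFiniteMoments_of_map_eq_gaussianReal (hΔB_meas k) (hΔB_law k))
      hstep (funext hY0 ▸ HasFiniteMoments.const Y0)
  set γ := gaussianReal 0 ⟨Δt, hΔt0.le⟩
  set q := γ.real (Set.Icc (-1) 1)
  have hq : 0 < q := measureReal_gaussianReal_pos 0 hv (by simp)
  set r := max (3 / Δt + 3) (2 / q)
  have hr1 : 1 ≤ r := le_max_of_le_left (le_add_of_nonneg_of_le (by positivity) (by norm_num))
  have hrq : 2 ≤ r * q := (div_le_iff₀ hq).mp (le_max_right _ _)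
  set p := γ.real (Set.Ici (r + |emStep Δt 0 Y0 0|))
  have hp : 0 < p := measureReal_gaussianReal_pos 0 hv (by simp)
  have hlow : ∀ M : ℕ, p * 2 ^ M ≤ ∫ ω, |Y (M + 1) ω| ∂P := fun M ↦ calc
    p * 2 ^ M ≤ p * (r * q) ^ M := by gcongr
    _ = r ^ M * (p * q ^ M) := by ring
    _ ≤ r ^ 2 ^ M * (p * q ^ M) := by gcongr; exact Nat.lt_two_pow_self.le
    _ ≤ ∫ ω, |Y (M + 1) ω| ∂P :=
        pow_two_pow_mul_le_integral_abs_em hΔt0 (le_max_left _ _) hΔB_meas hΔB_indep hΔB_law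
          hstep hY0 (hmom _).integrable
  rw [← tendsto_add_atTop_iff_nat 1]
  exact tendsto_atTop_mono hlow
    ((tendsto_pow_atTop_atTop_of_one_lt one_lt_two).const_mul_atTop hp)

/-- Lemma 3.3: the Euler–Maruyama approximation of
`dx = ((-3x - x³)/(1+t)) dt + (1+t)⁻³ dB` blows up in mean for any step size
`Δt ∈ (0, 0.5)` and any initial value. -/
theorem em_counterexample_blowup {Ω : Type*} [MeasurableSpace Ω]
    (P : Measure Ω) [IsProbabilityMeasure P]
    (Δt : ℝ) (hΔt0 : 0 < Δt) (hΔt : Δt < 0.5)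
    (ΔB : ℕ → Ω → ℝ) (hΔB_meas : ∀ k, Measurable (ΔB k))
    (hΔB_indep : iIndepFun ΔB P)
    (hΔB_law : ∀ k, P.map (ΔB k) = gaussianReal 0 ⟨Δt, hΔt0.le⟩)
    (Y : ℕ → Ω → ℝ) (hY_meas : ∀ k, Measurable (Y k))
    (Y0 : ℝ) (hY0 : ∀ ω, Y 0 ω = Y0)
    (hstep : ∀ (k : ℕ) (ω : Ω), Y (k + 1) ω =
      Y k ω + (-3 * Y k ω - (Y k ω) ^ 3) / (1 + (k : ℝ) * Δt) * Δt +
        ((1 + (k : ℝ) * Δt) ^ 3)⁻¹ * ΔB k ω) :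
    Tendsto (fun k : ℕ => ∫ ω, |Y k ω| ∂P) atTop atTop :=
  em_counterexample_blowup_general P Δt hΔt0 ΔB hΔB_meas hΔB_indep hΔB_law Y Y0 hY0 hstep
end

section
/- Let f : ℝⁿ × (0,∞) → ℝⁿ be continuous in its first variable, and suppose there are constants K̄ ∈ ℝ (K̄ ≠ 0) and K₁ > 0 such that ⟨x − y, f(x,t) − f(y,t)⟩ ≤ K̄(1+t)⁻¹|x − y|² and ⟨x, f(x,t)⟩ ≤ −K₁(1+t)⁻¹|x|² for all x, y ∈ ℝⁿ and t > 0. If 0 < Δt < |K̄|⁻¹, then for every t > 0 and every b ∈ ℝⁿ there exists a unique x ∈ ℝⁿ satisfying x = f(x,t)Δt + b. -/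
open scoped RealInnerProductSpace

open Filter Module

/-! The map `x ↦ x - Δt • f x t` is strongly monotone with constant `1 - Δt K (1 + t)⁻¹ > 0`
by the one-sided Lipschitz condition, hence injective. A continuous strongly monotone map of a
finite-dimensional space is onto, by induction on the dimension: fixing `v ≠ 0`, on each line
`w + ℝ v` with `w ⟂ v` the component `⟪v, G ·⟫` is a strongly monotone real function, so it takes
the value `⟪v, z⟫` at a point `φ w` depending continuously on `w`, and projecting
`G (w + φ w • v)` onto `vᗮ` gives a continuous strongly monotone map in one dimension less. -/

section StronglyMonotone

variable {E : Type*} [NormedAddCommGroup E] [InnerProductSpace ℝ E]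

def StronglyMonotoneWith (c : ℝ) (G : E → E) : Prop :=
  ∀ x y, c * ‖x - y‖ ^ 2 ≤ ⟪x - y, G x - G y⟫

variable {c : ℝ} {G : E → E}

theorem StronglyMonotoneWith.mul_dist_le (hG : StronglyMonotoneWith c G) (x y : E) :
    c * dist x y ≤ dist (G x) (G y) := by
  rcases eq_or_ne x y with rfl | hxy
  · simp
  have hpos : 0 < ‖x - y‖ := norm_pos_iff.2 (sub_ne_zero.2 hxy)
  rw [dist_eq_norm, dist_eq_norm]
  refine le_of_mul_le_mul_right ?_ hpos
  calc c * ‖x - y‖ * ‖x - y‖ = c * ‖x - y‖ ^ 2 := by ring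
    _ ≤ ⟪x - y, G x - G y⟫ := hG x y
    _ ≤ ‖x - y‖ * ‖G x - G y‖ := real_inner_le_norm _ _
    _ = ‖G x - G y‖ * ‖x - y‖ := mul_comm _ _

theorem StronglyMonotoneWith.injective (hG : StronglyMonotoneWith c G) (hc : 0 < c) :
    Function.Injective G := fun x y hxy => by
  have := hG.mul_dist_le x y
  rw [hxy, dist_self] at this
  exact dist_le_zero.1 (nonpos_of_mul_nonpos_right this hc)

theorem StronglyMonotoneWith.surjective_real {g : ℝ → ℝ} (hg : StronglyMonotoneWith c g)
    (hc : 0 < c) (hgc : Continuous g) : Function.Surjective g := by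
  have hg0 : ∀ s, c * s ^ 2 ≤ s * (g s - g 0) := fun s => by
    simpa only [sub_zero, Real.norm_eq_abs, sq_abs, Real.inner_apply] using hg s 0
  have h_lower : ∀ s, 0 ≤ s → g 0 + c * s ≤ g s := fun s hs => by
    rcases hs.eq_or_lt with rfl | hs
    · simp
    nlinarith [hg0 s]
  have h_upper : ∀ s, s ≤ 0 → g s ≤ g 0 + c * s := fun s hs => by
    rcases hs.eq_or_lt with rfl | hs
    · simp
    nlinarith [hg0 s]
  refine hgc.surjective ?_ ?_
  · refine tendsto_atTop_mono' _ (eventually_ge_atTop 0 |>.mono h_lower) ?_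
    exact tendsto_atTop_add_const_left _ _ (tendsto_id.const_mul_atTop hc)
  · refine tendsto_atBot_mono' _ (eventually_le_atBot 0 |>.mono h_upper) ?_
    exact tendsto_atBot_add_const_left _ _ (tendsto_id.const_mul_atBot hc)

theorem StronglyMonotoneWith.restrict_line (hG : StronglyMonotoneWith c G) (x₀ v : E) :
    StronglyMonotoneWith (c * ‖v‖ ^ 2) fun s : ℝ => ⟪v, G (x₀ + s • v)⟫ := fun s s' => by
  have h := hG (x₀ + s • v) (x₀ + s' • v)
  rw [add_sub_add_left_eq_sub, ← sub_smul, norm_smul, mul_pow, real_inner_smul_left] at h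
  rw [Real.inner_apply, ← inner_sub_right]
  linarith

theorem continuous_of_stronglyMonotoneWith_root {X : Type*} [TopologicalSpace X]
    {h : X → ℝ → ℝ} (hc : 0 < c) (hh : ∀ x, StronglyMonotoneWith c (h x))
    (hcont : ∀ s, Continuous fun x => h x s) {φ : X → ℝ} {a : ℝ} (hφ : ∀ x, h x (φ x) = a) :
    Continuous φ := by
  refine continuous_iff_continuousAt.2 fun x₀ => tendsto_iff_dist_tendsto_zero.2 ?_
  have hbound : ∀ x, dist (φ x) (φ x₀) ≤ c⁻¹ * dist (h x (φ x₀)) (h x₀ (φ x₀)) := fun x => by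
    rw [le_inv_mul_iff₀ hc, dist_comm (h x _), hφ x₀, ← hφ x]
    exact (hh x).mul_dist_le _ _
  refine squeeze_zero (fun _ => dist_nonneg) hbound ?_
  simpa using ((tendsto_iff_dist_tendsto_zero.1 ((hcont (φ x₀)).tendsto x₀)).const_mul c⁻¹)

theorem StronglyMonotoneWith.orthogonalProjectionOnto_comp (hG : StronglyMonotoneWith c G)
    (hc : 0 ≤ c) {v : E} {φ : (ℝ ∙ v)ᗮ → ℝ} {a : ℝ} (hφ : ∀ w, ⟪v, G (w + φ w • v)⟫ = a) :
    StronglyMonotoneWith c fun w : (ℝ ∙ v)ᗮ =>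
      (ℝ ∙ v)ᗮ.orthogonalProjectionOnto (G (w + φ w • v)) := by
  intro w w'
  set x : E := w + φ w • v
  set x' : E := w' + φ w' • v
  have hperp : ⟪((w - w' : (ℝ ∙ v)ᗮ) : E), (φ w - φ w') • v⟫ = 0 :=
    Submodule.inner_left_of_mem_orthogonal
      (Submodule.smul_mem _ _ (Submodule.mem_span_singleton_self v)) (w - w').2
  have hdiff : x - x' = ((w - w' : (ℝ ∙ v)ᗮ) : E) + (φ w - φ w') • v := by
    simp only [x, x', Submodule.coe_sub, sub_smul]; abel
  have hinner : ⟪w - w', (ℝ ∙ v)ᗮ.orthogonalProjectionOnto (G x) -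
      (ℝ ∙ v)ᗮ.orthogonalProjectionOnto (G x')⟫ = ⟪x - x', G x - G x'⟫ := by
    have hv : ⟪v, G x - G x'⟫ = 0 := by
      rw [inner_sub_right, sub_eq_zero]
      exact (hφ w).trans (hφ w').symm
    rw [← map_sub, Submodule.inner_orthogonalProjectionOnto_eq_of_mem_left, hdiff, inner_add_left,
      real_inner_smul_left, hv, mul_zero, add_zero]
  have hnorm : ‖w - w'‖ ^ 2 ≤ ‖x - x'‖ ^ 2 := by
    rw [hdiff, sq, sq, norm_add_sq_eq_norm_sq_add_norm_sq_real hperp, Submodule.coe_norm]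
    exact le_add_of_nonneg_right (mul_self_nonneg _)
  calc c * ‖w - w'‖ ^ 2 ≤ c * ‖x - x'‖ ^ 2 := mul_le_mul_of_nonneg_left hnorm hc
    _ ≤ _ := hG x x'
    _ = _ := hinner.symm

theorem eq_of_inner_eq_of_orthogonalProjectionOnto_eq {v a b : E} (hv : ⟪v, a⟫ = ⟪v, b⟫)
    (hW : (ℝ ∙ v)ᗮ.orthogonalProjectionOnto a = (ℝ ∙ v)ᗮ.orthogonalProjectionOnto b) : a = b := by
  have hmem : a - b ∈ (ℝ ∙ v)ᗮ :=
    Submodule.mem_orthogonal_singleton_iff_inner_right.2 (by rw [inner_sub_right, hv, sub_self])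
  have hzero : (ℝ ∙ v)ᗮ.orthogonalProjectionOnto (a - b) = 0 := by rw [map_sub, hW, sub_self]
  exact sub_eq_zero.1 <| Submodule.disjoint_def.1 (Submodule.orthogonal_disjoint _) _ hmem
    (Submodule.orthogonalProjectionOnto_eq_zero_iff.1 hzero)

theorem StronglyMonotoneWith.surjective [FiniteDimensional ℝ E] (hG : StronglyMonotoneWith c G)
    (hc : 0 < c) (hGc : Continuous G) : Function.Surjective G := by
  obtain ⟨n, hn⟩ : ∃ n, finrank ℝ E = n := ⟨_, rfl⟩
  induction n generalizing E with
  | zero =>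
    have : Subsingleton E := finrank_zero_iff.1 hn
    exact fun z => ⟨z, Subsingleton.elim _ _⟩
  | succ n ih =>
    intro z
    have : Fact (finrank ℝ E = n + 1) := ⟨hn⟩
    have : Nontrivial E := Module.nontrivial_of_finrank_eq_succ hn
    obtain ⟨v, hv⟩ := exists_ne (0 : E)
    set W := (ℝ ∙ v)ᗮ
    have hcv : 0 < c * ‖v‖ ^ 2 := by positivity
    choose φ hφ using fun w : W =>
      (hG.restrict_line w v).surjective_real hcv (by fun_prop) ⟪v, z⟫
    have hφc : Continuous φ := continuous_of_stronglyMonotoneWith_root hcv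
      (fun w : W => hG.restrict_line w v) (fun s => by fun_prop) hφ
    obtain ⟨w, hw⟩ := ih (hG.orthogonalProjectionOnto_comp hc.le hφ) (by fun_prop)
      (Submodule.finrank_orthogonal_span_singleton hv) (W.orthogonalProjectionOnto z)
    exact ⟨w + φ w • v, eq_of_inner_eq_of_orthogonalProjectionOnto_eq (hφ w) hw⟩

theorem stronglyMonotoneWith_id_sub_smul {F : E → E} {L τ : ℝ}
    (hF : ∀ x y, ⟪x - y, F x - F y⟫ ≤ L * ‖x - y‖ ^ 2) (hτ : 0 ≤ τ) :
    StronglyMonotoneWith (1 - τ * L) fun x => x - τ • F x := fun x y => by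
  have h : x - τ • F x - (y - τ • F y) = (x - y) - τ • (F x - F y) := by
    rw [smul_sub]; abel
  rw [h, inner_sub_right, real_inner_smul_right, real_inner_self_eq_norm_sq]
  nlinarith [mul_le_mul_of_nonneg_left (hF x y) hτ]

end StronglyMonotone

theorem backward_euler_step_wellposed_general {n : ℕ}
    (f : EuclideanSpace ℝ (Fin n) → ℝ → EuclideanSpace ℝ (Fin n))
    (hf_cont : ∀ t : ℝ, 0 < t → Continuous fun x => f x t)
    (K : ℝ)
    (hf_lip : ∀ (x y : EuclideanSpace ℝ (Fin n)) (t : ℝ), 0 < t →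
      ⟪x - y, f x t - f y t⟫ ≤ K * (1 + t)⁻¹ * ‖x - y‖ ^ 2)
    (Δt : ℝ) (hΔt0 : 0 < Δt) (hΔt : Δt < |K|⁻¹) :
    ∀ (t : ℝ), 0 < t → ∀ b : EuclideanSpace ℝ (Fin n),
      ∃! x : EuclideanSpace ℝ (Fin n), x = Δt • f x t + b := by
  intro t ht b
  have hΔtK : Δt * |K| < 1 := by
    rcases (abs_nonneg K).eq_or_lt with hK | hK
    · simp [← hK]
    · exact (lt_div_iff₀ hK).1 (by rwa [one_div])
  have hrate : K * (1 + t)⁻¹ ≤ |K| := calc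
    K * (1 + t)⁻¹ ≤ |K| * (1 + t)⁻¹ := by gcongr; exact le_abs_self K
    _ ≤ |K| := mul_le_of_le_one_right (abs_nonneg K) (inv_le_one_of_one_le₀ (by linarith))
  have hc : 0 < 1 - Δt * (K * (1 + t)⁻¹) := by nlinarith
  have hG := stronglyMonotoneWith_id_sub_smul (fun x y => hf_lip x y t ht) hΔt0.le
  have hbij : Function.Bijective fun x => x - Δt • f x t :=
    ⟨hG.injective hc, hG.surjective hc (continuous_id.sub ((hf_cont t ht).const_smul Δt))⟩
  simpa only [sub_eq_iff_eq_add'] using hbij.existsUnique b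

/-- Lemma 3.4: well-posedness of the backward Euler–Maruyama step. Under the one-sided
Lipschitz and dissipativity conditions, for each `t > 0` and `b` there is a unique root
`x` of `x = f(x,t)Δt + b`. -/
theorem backward_euler_step_wellposed {n : ℕ}
    (f : EuclideanSpace ℝ (Fin n) → ℝ → EuclideanSpace ℝ (Fin n))
    (hf_cont : ∀ t : ℝ, 0 < t → Continuous fun x => f x t)
    (K : ℝ) (hK : K ≠ 0) (K₁ : ℝ) (hK₁ : 0 < K₁)
    (hf_lip : ∀ (x y : EuclideanSpace ℝ (Fin n)) (t : ℝ), 0 < t →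
      ⟪x - y, f x t - f y t⟫ ≤ K * (1 + t)⁻¹ * ‖x - y‖ ^ 2)
    (hf_diss : ∀ (x : EuclideanSpace ℝ (Fin n)) (t : ℝ), 0 < t →
      ⟪x, f x t⟫ ≤ -K₁ * (1 + t)⁻¹ * ‖x‖ ^ 2)
    (Δt : ℝ) (hΔt0 : 0 < Δt) (hΔt : Δt < |K|⁻¹) :
    ∀ (t : ℝ), 0 < t → ∀ b : EuclideanSpace ℝ (Fin n),
      ∃! x : EuclideanSpace ℝ (Fin n), x = Δt • f x t + b :=
  backward_euler_step_wellposed_general f hf_cont K hf_lip Δt hΔt0 hΔt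
end

section
/- Let f : ℝⁿ × (0,∞) → ℝⁿ satisfy ⟨x, f(x,t)⟩ ≤ −K₁(1+t)⁻¹|x|² for all x ∈ ℝⁿ and t > 0, where K₁ > 0. Let Δt > 0, let k be a nonnegative integer, and suppose z, u ∈ ℝⁿ satisfy z = f(z, (k+1)Δt)Δt + u. Then |z|² ≤ (1 − 2K₁Δt/(1 + (k+1)Δt + 2K₁Δt)) |u|². -/
/-!
Pairing the implicit equation `z = Δt • f z t + u` with `z` turns the dissipativity of `f` into
`⟪z, z - u⟫ ≤ -c ‖z‖²` with `c = K₁ Δt / (1 + t)`. Cauchy–Schwarz then gives `(1 + c) ‖z‖ ≤ ‖u‖`,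
and `(1 + c)² ≥ 1 + 2c`, where `1 / (1 + 2c)` is exactly the stated factor.
-/

open scoped RealInnerProductSpace

section ImplicitStep

variable {E : Type*} [NormedAddCommGroup E] [InnerProductSpace ℝ E] {z u : E} {c : ℝ}

theorem one_add_mul_norm_le_of_inner_sub_le (h : ⟪z, z - u⟫ ≤ -c * ‖z‖ ^ 2) :
    (1 + c) * ‖z‖ ≤ ‖u‖ := by
  rcases (norm_nonneg z).eq_or_lt with hz | hz
  · rw [← hz, mul_zero]
    exact norm_nonneg u
  have hzu : (1 + c) * ‖z‖ ^ 2 ≤ ‖z‖ * ‖u‖ := by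
    have hexpand : ⟪z, z - u⟫ = ‖z‖ ^ 2 - ⟪z, u⟫ := by
      rw [inner_sub_right, real_inner_self_eq_norm_sq]
    linarith [real_inner_le_norm z u]
  refine le_of_mul_le_mul_left ?_ hz
  linarith

theorem sq_norm_le_of_inner_sub_le (hc : 0 ≤ c) (h : ⟪z, z - u⟫ ≤ -c * ‖z‖ ^ 2) :
    ‖z‖ ^ 2 ≤ (1 + 2 * c)⁻¹ * ‖u‖ ^ 2 := by
  rw [inv_mul_eq_div, le_div_iff₀ (by positivity)]
  calc ‖z‖ ^ 2 * (1 + 2 * c) ≤ ((1 + c) * ‖z‖) ^ 2 := by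
        nlinarith [mul_nonneg (sq_nonneg c) (sq_nonneg ‖z‖)]
    _ ≤ ‖u‖ ^ 2 := pow_le_pow_left₀ (by positivity) (one_add_mul_norm_le_of_inner_sub_le h) 2

end ImplicitStep

/-- The one-step contraction estimate for the backward Euler–Maruyama method
(proof of Theorem 3.5). -/
theorem bem_one_step_contraction {n : ℕ}
    (f : EuclideanSpace ℝ (Fin n) → ℝ → EuclideanSpace ℝ (Fin n))
    (K₁ : ℝ) (hK₁ : 0 < K₁)
    (hf : ∀ (x : EuclideanSpace ℝ (Fin n)) (t : ℝ), 0 < t →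
      ⟪x, f x t⟫ ≤ -K₁ * (1 + t)⁻¹ * ‖x‖ ^ 2)
    (Δt : ℝ) (hΔt : 0 < Δt) (k : ℕ)
    (z u : EuclideanSpace ℝ (Fin n))
    (hz : z = Δt • f z (((k : ℝ) + 1) * Δt) + u) :
    ‖z‖ ^ 2 ≤
      (1 - 2 * K₁ * Δt / (1 + ((k : ℝ) + 1) * Δt + 2 * K₁ * Δt)) * ‖u‖ ^ 2 := by
  set t : ℝ := ((k : ℝ) + 1) * Δt
  have ht : 0 < t := by positivity
  have hdiss : ⟪z, z - u⟫ ≤ -(K₁ * Δt / (1 + t)) * ‖z‖ ^ 2 := by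
    rw [sub_eq_of_eq_add hz, real_inner_smul_right]
    exact (mul_le_mul_of_nonneg_left (hf z t ht) hΔt.le).trans_eq (by ring)
  have hfactor : 1 - 2 * K₁ * Δt / (1 + t + 2 * K₁ * Δt) = (1 + 2 * (K₁ * Δt / (1 + t)))⁻¹ := by
    field_simp
    ring
  rw [hfactor]
  exact sq_norm_le_of_inner_sub_le (by positivity) hdiss
end

section
/- Let K₁ > 1/2 be a real number and Δt > 0. Then for every nonnegative integer k, [Γ(k + 1 + Δt⁻¹) · Γ(1 + 2K₁ + Δt⁻¹)] / [Γ(k + 1 + Δt⁻¹ + 2K₁) · Γ(1 + Δt⁻¹)] ≤ ((k+1)Δt + 1)^{−2K₁} · ((1 + 2K₁)Δt + 1)^{2K₁}. -/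
open Real Set

lemma gammaA {x s : ℝ} (hx : 0 < x) (hs : 1 < s) :
    x ^ s * Real.Gamma x ≤ Real.Gamma (x + s) := by
  have hG := Real.convexOn_log_Gamma
  have key := hG.slope_mono_adjacent (show x ∈ Ioi (0:ℝ) from hx)
      (show x + s ∈ Ioi (0:ℝ) by exact mem_Ioi.mpr (by linarith))
      (show x < x + 1 by linarith) (show x + 1 < x + s by linarith)
  simp only [Function.comp_apply] at key
  have e1 : Real.log (Real.Gamma (x + 1)) = Real.log x + Real.log (Real.Gamma x) := by
    rw [Real.Gamma_add_one hx.ne', Real.log_mul hx.ne' (Real.Gamma_pos_of_pos hx).ne']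
  have hs1 : (0:ℝ) < s - 1 := by linarith
  rw [div_le_div_iff₀ (by linarith) (by linarith)] at key
  have key2 : s * Real.log x + Real.log (Real.Gamma x) ≤ Real.log (Real.Gamma (x + s)) := by
    nlinarith [key, e1]
  calc x ^ s * Real.Gamma x
      = Real.exp (s * Real.log x + Real.log (Real.Gamma x)) := by
        rw [Real.exp_add, Real.exp_log (Real.Gamma_pos_of_pos hx),
          Real.rpow_def_of_pos hx, mul_comm (Real.log x) s]
    _ ≤ Real.exp (Real.log (Real.Gamma (x + s))) := Real.exp_le_exp.mpr key2
    _ = Real.Gamma (x + s) := Real.exp_log (Real.Gamma_pos_of_pos (by linarith))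

lemma gammaB {y s : ℝ} (hy : 0 < y) (hs : 0 < s) :
    Real.Gamma (y + s) ≤ (y + s) ^ s * Real.Gamma y := by
  have hG := Real.convexOn_log_Gamma
  have hys : 0 < y + s := by linarith
  have key := hG.slope_mono_adjacent (show y ∈ Ioi (0:ℝ) from hy)
      (show y + s + 1 ∈ Ioi (0:ℝ) by exact mem_Ioi.mpr (by linarith))
      (show y < y + s by linarith) (show y + s < y + s + 1 by linarith)
  simp only [Function.comp_apply] at key
  have e1 : Real.log (Real.Gamma (y + s + 1)) =
      Real.log (y + s) + Real.log (Real.Gamma (y + s)) := by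
    rw [Real.Gamma_add_one hys.ne', Real.log_mul hys.ne' (Real.Gamma_pos_of_pos hys).ne']
  rw [div_le_div_iff₀ (by linarith) (by linarith)] at key
  have key2 : Real.log (Real.Gamma (y + s)) ≤ s * Real.log (y + s) + Real.log (Real.Gamma y) := by
    nlinarith [key, e1]
  calc Real.Gamma (y + s) = Real.exp (Real.log (Real.Gamma (y + s))) :=
        (Real.exp_log (Real.Gamma_pos_of_pos hys)).symm
    _ ≤ Real.exp (s * Real.log (y + s) + Real.log (Real.Gamma y)) := Real.exp_le_exp.mpr key2
    _ = (y + s) ^ s * Real.Gamma y := by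
        rw [Real.exp_add, Real.exp_log (Real.Gamma_pos_of_pos hy),
          Real.rpow_def_of_pos hys, mul_comm (Real.log (y + s)) s]

lemma core {x y s : ℝ} (hx : 0 < x) (hy : 0 < y) (hs : 1 < s) :
    Real.Gamma x * Real.Gamma (y + s) / (Real.Gamma (x + s) * Real.Gamma y) ≤
      (y + s) ^ s / x ^ s := by
  have hGx := Real.Gamma_pos_of_pos hx
  have hGy := Real.Gamma_pos_of_pos hy
  have h1 := gammaB hy (by linarith : (0:ℝ) < s)
  have h2 := gammaA hx hs
  have hxs : (0:ℝ) < x ^ s := Real.rpow_pos_of_pos hx s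
  have hys : (0:ℝ) < (y + s) ^ s := Real.rpow_pos_of_pos (by linarith) s
  have step1 : Real.Gamma x * Real.Gamma (y + s) / (Real.Gamma (x + s) * Real.Gamma y)
      ≤ Real.Gamma x * ((y + s) ^ s * Real.Gamma y) / (x ^ s * Real.Gamma x * Real.Gamma y) :=
    div_le_div₀ (by positivity) (mul_le_mul_of_nonneg_left h1 hGx.le) (by positivity)
      (mul_le_mul_of_nonneg_right h2 hGy.le)
  have step2 : Real.Gamma x * ((y + s) ^ s * Real.Gamma y) / (x ^ s * Real.Gamma x * Real.Gamma y)
      = (y + s) ^ s / x ^ s := by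
    field_simp
  linarith [step1, step2.le, step2.ge]

/-- First gamma-ratio estimate in the proof of Theorem 3.5 (backward Euler–Maruyama). -/
theorem bem_gamma_ratio_first (K₁ Δt : ℝ) (hK₁ : 1 / 2 < K₁) (hΔt : 0 < Δt) :
    ∀ k : ℕ,
      Real.Gamma ((k : ℝ) + 1 + Δt⁻¹) * Real.Gamma (1 + 2 * K₁ + Δt⁻¹) /
          (Real.Gamma ((k : ℝ) + 1 + Δt⁻¹ + 2 * K₁) * Real.Gamma (1 + Δt⁻¹)) ≤
        (((k : ℝ) + 1) * Δt + 1) ^ (-(2 * K₁)) * ((1 + 2 * K₁) * Δt + 1) ^ (2 * K₁) := by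
  intro k
  set s : ℝ := 2 * K₁ with hsdef
  set x : ℝ := (k : ℝ) + 1 + Δt⁻¹ with hxdef
  set y : ℝ := 1 + Δt⁻¹ with hydef
  have ha : (0:ℝ) < Δt⁻¹ := inv_pos.mpr hΔt
  have hx : 0 < x := by positivity
  have hy : 0 < y := by positivity
  have hs : 1 < s := by rw [hsdef]; linarith
  have hys : 0 < y + s := by linarith
  have e1 : ((k : ℝ) + 1) * Δt + 1 = Δt * x := by
    rw [hxdef]; field_simp
  have e2 : (1 + 2 * K₁) * Δt + 1 = Δt * (y + s) := by
    rw [hydef, hsdef]; field_simp; ring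
  have e3 : (1 : ℝ) + 2 * K₁ + Δt⁻¹ = y + s := by rw [hydef, hsdef]; ring
  have hRHS : (((k : ℝ) + 1) * Δt + 1) ^ (-(2 * K₁)) * ((1 + 2 * K₁) * Δt + 1) ^ (2 * K₁)
      = (y + s) ^ s / x ^ s := by
    rw [e1, e2, ← hsdef, Real.mul_rpow hΔt.le hx.le, Real.mul_rpow hΔt.le hys.le,
      Real.rpow_neg hΔt.le, Real.rpow_neg hx.le]
    field_simp
  rw [e3, hRHS]
  exact core hx hy hs
end

section
/- Let K₁ > 1/2 be a real number and Δt > 0. Then for all nonnegative integers k and r, [Γ(k + 1 + Δt⁻¹) · Γ(r + 1 + Δt⁻¹ + 2K₁)] / [Γ(k + 1 + Δt⁻¹ + 2K₁) · Γ(r + 1 + Δt⁻¹)] ≤ ((k+1)Δt + 1)^{−2K₁} · ((r + 1 + 2K₁)Δt + 1)^{2K₁}. -/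
/-!
Both factors are controlled by the log-convexity of `Γ` on `(0, ∞)`. Since
`log Γ (t + 1) - log Γ t = log t`, comparing the slope of `log ∘ Γ` over `[t, t + s]` with its
slope over a neighbouring unit interval gives `t ^ s ≤ Γ (t + s) / Γ t ≤ (t + s) ^ s` for `s ≥ 1`.
With `x = k + 1 + Δt⁻¹`, `y = r + 1 + Δt⁻¹` and `s = 2 K₁`, the lower bound handles
`Γ x / Γ (x + s)`, the upper bound handles `Γ (y + s) / Γ y`, and the bases of the right-hand side
are `Δt x` and `Δt (y + s)`, the powers of `Δt` cancelling.
-/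

open Real Set

namespace Real

lemma log_Gamma_add_one_sub_log_Gamma {t : ℝ} (ht : 0 < t) :
    log (Gamma (t + 1)) - log (Gamma t) = log t := by
  rw [Gamma_add_one ht.ne', log_mul ht.ne' (Gamma_pos_of_pos ht).ne']
  ring

lemma log_Gamma_add_sub_log_Gamma_le {t s : ℝ} (ht : 0 < t) (hs : 0 < s) :
    log (Gamma (t + s)) - log (Gamma t) ≤ s * log (t + s) := by
  have h := convexOn_log_Gamma.slope_mono_adjacent (mem_Ioi.mpr ht)
    (mem_Ioi.mpr (by linarith : (0 : ℝ) < t + s + 1)) (by linarith : t < t + s)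
    (by linarith : t + s < t + s + 1)
  simp only [Function.comp_apply, add_sub_cancel_left, div_one,
    log_Gamma_add_one_sub_log_Gamma (by linarith : 0 < t + s)] at h
  rwa [div_le_iff₀ hs, mul_comm] at h

lemma mul_log_le_log_Gamma_add_sub_log_Gamma {t s : ℝ} (ht : 0 < t) (hs : 1 ≤ s) :
    s * log t ≤ log (Gamma (t + s)) - log (Gamma t) := by
  have h := convexOn_log_Gamma.secant_mono (mem_Ioi.mpr ht)
    (mem_Ioi.mpr (by linarith : (0 : ℝ) < t + 1)) (mem_Ioi.mpr (by linarith : (0 : ℝ) < t + s))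
    (by linarith : t + 1 ≠ t) (by linarith : t + s ≠ t) (by linarith : t + 1 ≤ t + s)
  simp only [Function.comp_apply, add_sub_cancel_left, div_one,
    log_Gamma_add_one_sub_log_Gamma ht] at h
  rwa [le_div_iff₀ (by linarith), mul_comm] at h

lemma Gamma_add_div_Gamma_le_rpow {t s : ℝ} (ht : 0 < t) (hs : 0 < s) :
    Gamma (t + s) / Gamma t ≤ (t + s) ^ s := by
  have hts : 0 < t + s := by linarith
  have hGt := Gamma_pos_of_pos ht
  have hGts := Gamma_pos_of_pos hts
  rw [← log_le_log_iff (by positivity) (by positivity), log_div hGts.ne' hGt.ne', log_rpow hts]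
  exact log_Gamma_add_sub_log_Gamma_le ht hs

lemma rpow_le_Gamma_add_div_Gamma {t s : ℝ} (ht : 0 < t) (hs : 1 ≤ s) :
    t ^ s ≤ Gamma (t + s) / Gamma t := by
  have hGt := Gamma_pos_of_pos ht
  have hGts := Gamma_pos_of_pos (by linarith : 0 < t + s)
  rw [← log_le_log_iff (by positivity) (by positivity), log_div hGts.ne' hGt.ne', log_rpow ht]
  exact mul_log_le_log_Gamma_add_sub_log_Gamma ht hs

lemma Gamma_div_Gamma_add_le_rpow_neg {t s : ℝ} (ht : 0 < t) (hs : 1 ≤ s) :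
    Gamma t / Gamma (t + s) ≤ t ^ (-s) := by
  rw [rpow_neg ht.le, ← inv_div]
  exact inv_anti₀ (by positivity) (rpow_le_Gamma_add_div_Gamma ht hs)

lemma Gamma_mul_Gamma_add_div_le {x y s : ℝ} (hx : 0 < x) (hy : 0 < y) (hs : 1 ≤ s) :
    Gamma x * Gamma (y + s) / (Gamma (x + s) * Gamma y) ≤ x ^ (-s) * (y + s) ^ s := by
  rw [mul_div_mul_comm]
  exact mul_le_mul (Gamma_div_Gamma_add_le_rpow_neg hx hs)
    (Gamma_add_div_Gamma_le_rpow hy (by linarith))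
    (div_nonneg (Gamma_pos_of_pos (by linarith)).le (Gamma_pos_of_pos hy).le) (by positivity)

end Real

/-- Second gamma-ratio estimate in the proof of Theorem 3.5 (backward Euler–Maruyama). -/
theorem bem_gamma_ratio_second (K₁ Δt : ℝ) (hK₁ : 1 / 2 < K₁) (hΔt : 0 < Δt) :
    ∀ k r : ℕ,
      Real.Gamma ((k : ℝ) + 1 + Δt⁻¹) * Real.Gamma ((r : ℝ) + 1 + Δt⁻¹ + 2 * K₁) /
          (Real.Gamma ((k : ℝ) + 1 + Δt⁻¹ + 2 * K₁) * Real.Gamma ((r : ℝ) + 1 + Δt⁻¹)) ≤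
        (((k : ℝ) + 1) * Δt + 1) ^ (-(2 * K₁)) *
          (((r : ℝ) + 1 + 2 * K₁) * Δt + 1) ^ (2 * K₁) := by
  intro k r
  have hΔt_inv : 0 < Δt⁻¹ := inv_pos.mpr hΔt
  have hx : 0 < (k : ℝ) + 1 + Δt⁻¹ := by positivity
  have hy : 0 < (r : ℝ) + 1 + Δt⁻¹ := by positivity
  have hx_base : ((k : ℝ) + 1) * Δt + 1 = Δt * ((k : ℝ) + 1 + Δt⁻¹) := by
    field_simp
  have hy_base : ((r : ℝ) + 1 + 2 * K₁) * Δt + 1 = Δt * ((r : ℝ) + 1 + Δt⁻¹ + 2 * K₁) := by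
    field_simp
    ring
  calc _ ≤ ((k : ℝ) + 1 + Δt⁻¹) ^ (-(2 * K₁)) * ((r : ℝ) + 1 + Δt⁻¹ + 2 * K₁) ^ (2 * K₁) :=
        Gamma_mul_Gamma_add_div_le hx hy (by linarith)
    _ = _ := by
        rw [hx_base, hy_base, mul_rpow hΔt.le hx.le, mul_rpow hΔt.le (by linarith),
          rpow_neg hΔt.le]
        field_simp
end
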